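/- arXiv:1704.07689 — 10 statements merged into one kernel-verified Lean document; each statement's English description precedes it below -/
import Mathlib

section
/- Let M be an Alexander quandle (a Z[t,t⁻¹]-module with operation a * b = t·a + (1−t)·b). Then the connected component of M containing 0 equals the submodule (1−t)M. -/
open LaurentPolynomial

/-- The Alexander quandle operation on a `ℤ[t,t⁻¹]`-module: `a * b = t•a + (1-t)•b`. -/
noncomputable def alexOp (M : Type*) [AddCommGroup M] [Module (LaurentPolynomial ℤ) M]
    (a b : M) : M :=
  (T 1 : LaurentPolynomial ℤ) • a + (1 - T 1 : LaurentPolynomial ℤ) • b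

/-- Two elements are in the same connected component iff they are related by the
equivalence relation generated by the right translations `S_c : x ↦ x * c`
(the orbit relation of the inner automorphism group). -/
def alexRel (M : Type*) [AddCommGroup M] [Module (LaurentPolynomial ℤ) M] : M → M → Prop :=
  Relation.EqvGen fun x y => ∃ c, alexOp M x c = y

private lemma alex_step_iff (M : Type*) [AddCommGroup M] [Module (LaurentPolynomial ℤ) M]
    {x y : M} (h : ∃ c, alexOp M x c = y) :
    (∃ m : M, x = (1 - T 1 : LaurentPolynomial ℤ) • m) ↔
    (∃ m : M, y = (1 - T 1 : LaurentPolynomial ℤ) • m) := by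
  obtain ⟨c, hc⟩ := h
  unfold alexOp at hc
  constructor
  · rintro ⟨m, rfl⟩
    refine ⟨(T 1 : LaurentPolynomial ℤ) • m + c, ?_⟩
    rw [← hc, smul_add, smul_smul, smul_smul, mul_comm]
  · rintro ⟨m, hm⟩
    refine ⟨(T (-1) : LaurentPolynomial ℤ) • (m - c), ?_⟩
    have ht : (T 1 : LaurentPolynomial ℤ) * T (-1) = 1 := by
      rw [← T_add]; norm_num
    have : (T 1 : LaurentPolynomial ℤ) • x
        = (1 - T 1 : LaurentPolynomial ℤ) • (m - c) := by
      have := hc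
      rw [hm] at this
      rw [smul_sub]
      linear_combination (norm := module) this
    calc x = ((T 1 : LaurentPolynomial ℤ) * T (-1)) • x := by rw [ht, one_smul]
      _ = (T (-1) : LaurentPolynomial ℤ) • ((T 1 : LaurentPolynomial ℤ) • x) := by
          rw [← smul_smul]; exact smul_comm _ _ _
      _ = (1 - T 1 : LaurentPolynomial ℤ) • (T (-1) : LaurentPolynomial ℤ) • (m - c) := by
          rw [this, smul_comm]

/-- The connected component of `0` in an Alexander quandle `M` is the
submodule `(1 - t) M`. -/
theorem stmt_1 (M : Type*) [AddCommGroup M] [Module (LaurentPolynomial ℤ) M] :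
    {x : M | alexRel M 0 x} = {x : M | ∃ m : M, x = (1 - T 1 : LaurentPolynomial ℤ) • m} := by
  ext x
  simp only [Set.mem_setOf_eq]
  constructor
  · intro h
    have h0 : ∃ m : M, (0 : M) = (1 - T 1 : LaurentPolynomial ℤ) • m := ⟨0, by simp⟩
    have key : ∀ a b : M, alexRel M a b →
        ((∃ m : M, a = (1 - T 1 : LaurentPolynomial ℤ) • m) ↔
         (∃ m : M, b = (1 - T 1 : LaurentPolynomial ℤ) • m)) := by
      intro a b hab
      induction hab with
      | rel a b h => exact alex_step_iff M h
      | refl a => rfl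
      | symm a b _ ih => exact ih.symm
      | trans a b c _ _ ih1 ih2 => exact ih1.trans ih2
    exact (key 0 x h).mp h0
  · rintro ⟨m, rfl⟩
    exact Relation.EqvGen.rel _ _ ⟨m, by simp [alexOp]⟩
end

section
/- Let M be an Alexander quandle. For any a ∈ M, the translation map φ_a(x) = x + a restricts to a quandle isomorphism from the connected component Orb(0) onto the connected component Orb(a). Hence every connected component of M is isomorphic as a quandle to (1−t)M. -/
open LaurentPolynomial

/-- The connected component (orbit) of `a` in the Alexander quandle `M`. -/
def alexOrb (M : Type*) [AddCommGroup M] [Module (LaurentPolynomial ℤ) M] (a : M) : Set M :=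
  {x : M | alexRel M a x}

lemma alexRel_iff (M : Type*) [AddCommGroup M] [Module (LaurentPolynomial ℤ) M] (u v : M) :
    alexRel M u v ↔ ∃ m : M, v = u + (1 - T 1 : LaurentPolynomial ℤ) • m := by
  constructor
  · intro h
    induction h with
    | rel x y h =>
        obtain ⟨c, hc⟩ := h
        refine ⟨c - x, ?_⟩
        rw [← hc]
        simp only [alexOp, smul_sub, sub_smul, one_smul]
        abel
    | refl x => exact ⟨0, by simp⟩
    | symm x y _ ih =>
        obtain ⟨m, hm⟩ := ih
        exact ⟨-m, by rw [hm]; simp⟩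
    | trans x y z _ _ ih1 ih2 =>
        obtain ⟨m1, h1⟩ := ih1
        obtain ⟨m2, h2⟩ := ih2
        exact ⟨m1 + m2, by rw [h2, h1, smul_add]; abel⟩
  · rintro ⟨m, rfl⟩
    refine Relation.EqvGen.rel _ _ ⟨u + m, ?_⟩
    simp only [alexOp, smul_add, sub_smul, one_smul]
    abel

/-- For any `a` in an Alexander quandle `M`, the translation `φ_a (x) = x + a`
restricts to a quandle isomorphism from `Orb(0)` onto `Orb(a)`: it is a
bijection from `Orb(0)` onto `Orb(a)` preserving the quandle operation.
Hence every connected component of `M` is isomorphic as a quandle to `(1-t)M`: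
`Orb(a)` is the image under `φ_a` of `(1-t)M`. -/
theorem stmt_2 (M : Type*) [AddCommGroup M] [Module (LaurentPolynomial ℤ) M] (a : M) :
    Set.BijOn (fun x => x + a) (alexOrb M 0) (alexOrb M a) ∧
      (∀ x y : M, alexOp M (x + a) (y + a) = alexOp M x y + a) ∧
      alexOrb M a =
        (fun x => x + a) '' {x : M | ∃ m : M, x = (1 - T 1 : LaurentPolynomial ℤ) • m} := by
  have horb : ∀ b : M, alexOrb M b = {x : M | ∃ m : M, x = b + (1 - T 1 : LaurentPolynomial ℤ) • m} := by
    intro b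
    ext x
    exact alexRel_iff M b x
  have himg : alexOrb M a =
      (fun x => x + a) '' {x : M | ∃ m : M, x = (1 - T 1 : LaurentPolynomial ℤ) • m} := by
    rw [horb]
    ext x
    constructor
    · rintro ⟨m, rfl⟩
      exact ⟨_, ⟨m, rfl⟩, by abel⟩
    · rintro ⟨y, ⟨m, rfl⟩, rfl⟩
      exact ⟨m, by abel⟩
  refine ⟨⟨?_, ?_, ?_⟩, ?_, himg⟩
  · intro x hx
    rw [horb] at hx ⊢
    obtain ⟨m, rfl⟩ := hx
    exact ⟨m, by abel⟩
  · intro x _ y _ h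
    simpa using h
  · intro x hx
    rw [himg] at hx
    obtain ⟨y, hy, rfl⟩ := hx
    refine ⟨y, ?_, rfl⟩
    rw [horb]
    obtain ⟨m, rfl⟩ := hy
    exact ⟨m, by abel⟩
  · intro x y
    simp only [alexOp, smul_add, sub_smul, one_smul]
    abel
end

section
/- Let M = Z[t^{±1}]/(f₁(t),…,f_k(t)) be an Alexander quandle. Two elements [α(t)] and [β(t)] lie in the same connected component of M if and only if C_{[α]}(1) = C_{[β]}(1), where C_{[α]}(1) = { α(1) + a₁f₁(1) + ⋯ + a_k f_k(1) : a_i ∈ Z }. -/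
open LaurentPolynomial

/-- Evaluation of a Laurent polynomial at `t = 1`, as a ring homomorphism. -/
noncomputable def evalOne : LaurentPolynomial ℤ →+* ℤ :=
  ((AddMonoidAlgebra.lift ℤ ℤ ℤ) 1).toRingHom

/-- The set `C_{[α]}(1) = { α(1) + a₁ f₁(1) + ⋯ + a_k f_k(1) : aᵢ ∈ ℤ } ⊆ ℤ`. -/
noncomputable def Cset {k : ℕ} (f : Fin k → LaurentPolynomial ℤ)
    (α : LaurentPolynomial ℤ) : Set ℤ :=
  {n : ℤ | ∃ a : Fin k → ℤ, n = evalOne α + ∑ i, a i * evalOne (f i)}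

/-- The Alexander quandle operation `[α]*[β] = [tα + (1-t)β]` on `ℤ[t,t⁻¹]⧸J`. -/
noncomputable def qOp (J : Ideal (LaurentPolynomial ℤ)) (x y : LaurentPolynomial ℤ ⧸ J) :
    LaurentPolynomial ℤ ⧸ J :=
  Ideal.Quotient.mk J (T 1) * x + (1 - Ideal.Quotient.mk J (T 1)) * y

/-- The orbit relation of the inner automorphism group: the equivalence relation
generated by the right translations `x ↦ x * c`. -/
def qRel (J : Ideal (LaurentPolynomial ℤ)) :
    (LaurentPolynomial ℤ ⧸ J) → (LaurentPolynomial ℤ ⧸ J) → Prop :=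
  Relation.EqvGen fun x y => ∃ c, qOp J x c = y

lemma evalOne_T (n : ℤ) : evalOne (T n) = 1 := by
  show ((AddMonoidAlgebra.lift ℤ ℤ ℤ) 1) (AddMonoidAlgebra.single n 1) = 1
  rw [AddMonoidAlgebra.lift_single]; simp

lemma evalOne_C (r : ℤ) : evalOne (C r) = r := by
  show ((AddMonoidAlgebra.lift ℤ ℤ ℤ) 1) (AddMonoidAlgebra.single 0 r) = r
  rw [AddMonoidAlgebra.lift_single]; simp

lemma evalOne_toLaurent (p : Polynomial ℤ) : evalOne (Polynomial.toLaurent p) = p.eval 1 := by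
  have : evalOne.comp Polynomial.toLaurent = Polynomial.evalRingHom 1 := by
    apply Polynomial.ringHom_ext
    · intro r; simp [evalOne_C]
    · simp [Polynomial.toLaurent_X, evalOne_T]
  exact RingHom.congr_fun this p

lemma ker_evalOne {p : LaurentPolynomial ℤ} (h : evalOne p = 0) :
    p ∈ Ideal.span ({1 - T 1} : Set (LaurentPolynomial ℤ)) := by
  obtain ⟨n, q, hq⟩ := p.exists_T_pow
  have hq1 : q.eval 1 = 0 := by
    have := evalOne_toLaurent q
    rw [hq, map_mul, evalOne_T, h] at this
    simpa using this.symm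
  have hdvd : (Polynomial.X - 1 : Polynomial ℤ) ∣ q := by
    simpa using (by
      rw [Polynomial.dvd_iff_isRoot]; exact hq1 : (Polynomial.X - Polynomial.C (1:ℤ)) ∣ q)
  obtain ⟨r, hr⟩ := hdvd
  have hp : p = (1 - T 1) * (-(T (-n) * Polynomial.toLaurent r)) := by
    have hpq : p = Polynomial.toLaurent q * T (-n) := by
      rw [hq, mul_assoc, ← T_add]; simp
    rw [hpq, hr, map_mul]
    have hx1 : Polynomial.toLaurent (Polynomial.X - 1 : Polynomial ℤ) = -(1 - T 1) := by
      simp [Polynomial.toLaurent_X]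
    rw [hx1]; ring
  rw [hp]
  exact Ideal.mul_mem_right _ _ (Ideal.subset_span rfl)

lemma step_iff (J : Ideal (LaurentPolynomial ℤ)) (x y : LaurentPolynomial ℤ ⧸ J) :
    (∃ c, qOp J x c = y) ↔ ∃ d, y = x + (1 - Ideal.Quotient.mk J (T 1)) * d := by
  constructor
  · rintro ⟨c, rfl⟩
    exact ⟨c - x, by unfold qOp; ring⟩
  · rintro ⟨d, rfl⟩
    exact ⟨x + d, by unfold qOp; ring⟩

lemma qRel_iff (J : Ideal (LaurentPolynomial ℤ)) (x y : LaurentPolynomial ℤ ⧸ J) :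
    qRel J x y ↔ ∃ d, y = x + (1 - Ideal.Quotient.mk J (T 1)) * d := by
  constructor
  · intro h
    induction h with
    | rel a b hab => exact (step_iff J a b).1 hab
    | refl a => exact ⟨0, by ring⟩
    | symm a b _ ih => obtain ⟨d, rfl⟩ := ih; exact ⟨-d, by ring⟩
    | trans a b c _ _ ih1 ih2 =>
      obtain ⟨d1, rfl⟩ := ih1; obtain ⟨d2, rfl⟩ := ih2
      exact ⟨d1 + d2, by ring⟩
  · intro h
    exact Relation.EqvGen.rel _ _ ((step_iff J x y).2 h)

lemma qRel_iff_mem {k : ℕ} (f : Fin k → LaurentPolynomial ℤ) (α β : LaurentPolynomial ℤ) :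
    qRel (Ideal.span (Set.range f)) (Ideal.Quotient.mk _ α) (Ideal.Quotient.mk _ β) ↔
      β - α ∈ Ideal.span (insert (1 - T 1) (Set.range f)) := by
  rw [qRel_iff]
  constructor
  · rintro ⟨d, hd⟩
    obtain ⟨δ, rfl⟩ := Ideal.Quotient.mk_surjective d
    have : Ideal.Quotient.mk (Ideal.span (Set.range f)) (β - α - (1 - T 1) * δ) = 0 := by
      have := hd
      rw [show Ideal.Quotient.mk (Ideal.span (Set.range f)) (β - α - (1 - T 1) * δ)
        = Ideal.Quotient.mk _ β - Ideal.Quotient.mk _ α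
          - (1 - Ideal.Quotient.mk _ (T 1)) * Ideal.Quotient.mk _ δ from by
        simp only [RingHom.map_sub, RingHom.map_mul, RingHom.map_one], hd]
      ring
    have hmem : β - α - (1 - T 1) * δ ∈ Ideal.span (Set.range f) :=
      (Ideal.Quotient.eq_zero_iff_mem).1 this
    have h1 : β - α = (1 - T 1) * δ + (β - α - (1 - T 1) * δ) := by ring
    rw [h1]
    exact add_mem
      (Ideal.mul_mem_right _ _ (Ideal.subset_span (Set.mem_insert _ _)))
      (Ideal.span_mono (Set.subset_insert _ _) hmem)
  · intro h
    rw [Ideal.mem_span_insert] at h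
    obtain ⟨a, z, hz, hβα⟩ := h
    refine ⟨Ideal.Quotient.mk _ a, ?_⟩
    have : Ideal.Quotient.mk (Ideal.span (Set.range f)) (β - α - a * (1 - T 1)) =
        Ideal.Quotient.mk _ z := by rw [show β - α - a * (1 - T 1) = z from by rw [hβα]; ring]
    rw [Ideal.Quotient.eq_zero_iff_mem.2 hz] at this
    have := (by simpa only [RingHom.map_sub, RingHom.map_mul, RingHom.map_one, sub_eq_zero] using this)
    linear_combination (norm := ring_nf) this

lemma mem_iff_exists {k : ℕ} (f : Fin k → LaurentPolynomial ℤ) (γ : LaurentPolynomial ℤ) :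
    γ ∈ Ideal.span (insert (1 - T 1) (Set.range f)) ↔
      ∃ a : Fin k → ℤ, evalOne γ = ∑ i, a i * evalOne (f i) := by
  constructor
  · intro h
    have hmap : evalOne γ ∈ Ideal.map evalOne (Ideal.span (insert (1 - T 1) (Set.range f))) :=
      Ideal.mem_map_of_mem _ h
    rw [Ideal.map_span, Set.image_insert_eq] at hmap
    have h0 : evalOne (1 - T 1) = 0 := by rw [map_sub, map_one, evalOne_T]; ring
    rw [h0] at hmap
    have hrange : ⇑evalOne '' Set.range f = Set.range (fun i => evalOne (f i)) := by
      ext x; simp [Set.mem_range]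
    have : evalOne γ ∈ Ideal.span (Set.range (fun i => evalOne (f i))) := by
      rw [hrange] at hmap
      simpa [Ideal.span_insert, Set.singleton_zero, Ideal.span_zero, bot_sup_eq] using hmap
    rw [Ideal.span, Submodule.mem_span_range_iff_exists_fun] at this
    obtain ⟨a, ha⟩ := this
    exact ⟨a, by simpa [smul_eq_mul] using ha.symm⟩
  · rintro ⟨a, ha⟩
    have h0 : evalOne (γ - ∑ i, C (a i) * f i) = 0 := by
      rw [map_sub, map_sum, ha]
      simp [evalOne_C]
    have h1 : γ - ∑ i, C (a i) * f i ∈ Ideal.span (insert (1 - T 1) (Set.range f)) :=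
      Ideal.span_mono (Set.singleton_subset_iff.2 (Set.mem_insert _ _)) (ker_evalOne h0)
    have h2 : (∑ i, C (a i) * f i) ∈ Ideal.span (insert (1 - T 1) (Set.range f)) := by
      apply Ideal.sum_mem
      intro i _
      exact Ideal.mul_mem_left _ _
        (Ideal.subset_span (Set.mem_insert_of_mem _ (Set.mem_range_self i)))
    simpa using add_mem h1 h2

lemma Cset_eq_iff {k : ℕ} (f : Fin k → LaurentPolynomial ℤ) (α β : LaurentPolynomial ℤ) :
    Cset f α = Cset f β ↔ ∃ a : Fin k → ℤ, evalOne (β - α) = ∑ i, a i * evalOne (f i) := by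
  constructor
  · intro h
    have hβ : evalOne β ∈ Cset f β := ⟨0, by simp⟩
    rw [← h] at hβ
    obtain ⟨a, ha⟩ := hβ
    exact ⟨a, by rw [map_sub]; omega⟩
  · rintro ⟨a, ha⟩
    rw [map_sub] at ha
    ext n
    constructor
    · rintro ⟨b, rfl⟩
      exact ⟨fun i => b i - a i, by push_cast [sub_mul, Finset.sum_sub_distrib]; omega⟩
    · rintro ⟨b, rfl⟩
      exact ⟨fun i => b i + a i, by push_cast [add_mul, Finset.sum_add_distrib]; omega⟩

/-- In the Alexander quandle `M = ℤ[t,t⁻¹]/(f₁,…,f_k)`, two elements `[α]`, `[β]`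
lie in the same connected component iff `C_{[α]}(1) = C_{[β]}(1)`. -/
theorem stmt_4 {k : ℕ} (f : Fin k → LaurentPolynomial ℤ) (α β : LaurentPolynomial ℤ) :
    qRel (Ideal.span (Set.range f)) (Ideal.Quotient.mk _ α) (Ideal.Quotient.mk _ β) ↔
      Cset f α = Cset f β := by
  rw [qRel_iff_mem, mem_iff_exists, Cset_eq_iff]
end

section
/- Let M = Z[t^{±1}]/(f₁(t),…,f_k(t)), write f_i(t) = (1−t)·f̃_i(t) + f_i(1), and set I = { Σ a_i f̃_i(t) : a_i ∈ Z[t^{±1}], Σ a_i f_i(1) = 0 }. Then the map φ: Z[t^{±1}] → (1−t)M defined by φ(x) = (1−t)x + (f₁,…,f_k) is a surjective Z[t^{±1}]-module homomorphism with kernel (f₁,…,f_k) + I, so each connected component of M is isomorphic as a quandle to Z[t^{±1}]/((f₁,…,f_k)+I). -/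
open LaurentPolynomial

lemma one_sub_T_ne_zero : (1 - T 1 : LaurentPolynomial ℤ) ≠ 0 := by
  have h : (1 - T 1 : LaurentPolynomial ℤ) = Polynomial.toLaurent (1 - Polynomial.X) := by
    simp [Polynomial.toLaurent_X]
  rw [h]
  intro hc
  have h1 : (1 - Polynomial.X : Polynomial ℤ) = 0 :=
    Polynomial.toLaurent_injective (R := ℤ) (hc.trans (map_zero _).symm)
  have h2 := congrArg (fun p => Polynomial.coeff p 1) h1
  simp [Polynomial.coeff_one] at h2

lemma dvd_one_sub_T_nat (m : ℕ) : (1 - T 1 : LaurentPolynomial ℤ) ∣ (1 - T (m : ℤ)) := by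
  have h : (T (m : ℤ) : LaurentPolynomial ℤ) = (T 1) ^ m := by
    rw [T_pow]; norm_num
  rw [h]
  simpa using sub_dvd_pow_sub_pow (1 : LaurentPolynomial ℤ) (T 1) m

lemma dvd_one_sub_T (n : ℤ) : (1 - T 1 : LaurentPolynomial ℤ) ∣ (1 - T n) := by
  obtain ⟨m, rfl | rfl⟩ := Int.eq_nat_or_neg n
  · exact dvd_one_sub_T_nat m
  · have hTT : (T (-(m:ℤ)) * T (m:ℤ) : LaurentPolynomial ℤ) = 1 := by
      rw [← T_add, neg_add_cancel, T_zero]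
    have h : (1 - T (-(m:ℤ)) : LaurentPolynomial ℤ)
        = (1 - T (m:ℤ)) * (-(T (-(m:ℤ)))) := by
      linear_combination -hTT
    rw [h]
    exact (dvd_one_sub_T_nat m).mul_right _

lemma decomp (p : LaurentPolynomial ℤ) :
    ∃ q, p = (1 - T 1) * q + ((evalOne p : ℤ) : LaurentPolynomial ℤ) := by
  suffices h : (1 - T 1 : LaurentPolynomial ℤ) ∣ (p - ((evalOne p : ℤ) : LaurentPolynomial ℤ)) by
    obtain ⟨q, hq⟩ := h
    exact ⟨q, by linear_combination hq⟩
  induction p using LaurentPolynomial.induction_on' with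
  | add p q hp hq =>
    have : (p + q) - ((evalOne (p+q) : ℤ) : LaurentPolynomial ℤ)
        = (p - evalOne p) + (q - evalOne q) := by
      push_cast [map_add]; ring
    rw [this]; exact dvd_add hp hq
  | C_mul_T n a =>
    have hC : (C a : LaurentPolynomial ℤ) = (a : LaurentPolynomial ℤ) :=
      eq_intCast (LaurentPolynomial.C : ℤ →+* LaurentPolynomial ℤ) a
    have he : evalOne (C a * T n) = a := by
      rw [map_mul, evalOne_T, mul_one, hC, map_intCast, Int.cast_id]
    rw [he]
    have : (C a * T n : LaurentPolynomial ℤ) - (a : LaurentPolynomial ℤ)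
        = (a : LaurentPolynomial ℤ) * -(1 - T n) := by
      rw [hC]; ring
    rw [this]
    exact ((dvd_one_sub_T n).neg_right).mul_left _

set_option maxHeartbeats 1000000 in
/-- Let `M = ℤ[t,t⁻¹]/(f₁,…,f_k)`, write `fᵢ(t) = (1-t)·f̃ᵢ(t) + fᵢ(1)`, and let
`I = { Σ aᵢ f̃ᵢ : aᵢ ∈ ℤ[t,t⁻¹], Σ aᵢ fᵢ(1) = 0 }`.  Then the map
`φ : ℤ[t,t⁻¹] → (1-t)M`, `φ(x) = (1-t)x + (f₁,…,f_k)`, is a surjective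
`ℤ[t,t⁻¹]`-module homomorphism onto `(1-t)M` with kernel `(f₁,…,f_k) + I`;
consequently each connected component of `M` is isomorphic as a quandle to
`ℤ[t,t⁻¹]/((f₁,…,f_k) + I)`. -/
theorem stmt_7 {k : ℕ} (f ft : Fin k → LaurentPolynomial ℤ)
    (hft : ∀ i, f i = (1 - T 1) * ft i + ((evalOne (f i) : ℤ) : LaurentPolynomial ℤ)) :
    letI J : Ideal (LaurentPolynomial ℤ) := Ideal.span (Set.range f)
    letI Iset : Set (LaurentPolynomial ℤ) :=
      {g | ∃ a : Fin k → LaurentPolynomial ℤ, g = ∑ i, a i * ft i ∧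
        ∑ i, a i * ((evalOne (f i) : ℤ) : LaurentPolynomial ℤ) = 0}
    letI φ : LaurentPolynomial ℤ → LaurentPolynomial ℤ ⧸ J :=
      fun x => Ideal.Quotient.mk J ((1 - T 1) * x)
    (∀ x y, φ (x + y) = φ x + φ y) ∧
    (∀ r x, φ (r * x) = Ideal.Quotient.mk J r * φ x) ∧
    (Set.range φ =
      {y : LaurentPolynomial ℤ ⧸ J | ∃ x, y = (1 - Ideal.Quotient.mk J (T 1)) * x}) ∧
    (∀ x, φ x = 0 ↔ ∃ j ∈ J, ∃ g ∈ Iset, x = j + g) ∧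
    (∀ c : LaurentPolynomial ℤ ⧸ J,
      ∃ e : (LaurentPolynomial ℤ ⧸ (J ⊔ Ideal.span Iset)) ≃ {y // qRel J c y},
        ∀ u v, (e (qOp (J ⊔ Ideal.span Iset) u v)).val = qOp J (e u).val (e v).val) := by
  set J : Ideal (LaurentPolynomial ℤ) := Ideal.span (Set.range f) with hJdef
  set Iset : Set (LaurentPolynomial ℤ) :=
    {g | ∃ a : Fin k → LaurentPolynomial ℤ, g = ∑ i, a i * ft i ∧
      ∑ i, a i * ((evalOne (f i) : ℤ) : LaurentPolynomial ℤ) = 0} with hIdef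
  set φ : LaurentPolynomial ℤ → LaurentPolynomial ℤ ⧸ J :=
    fun x => Ideal.Quotient.mk J ((1 - T 1) * x) with hφdef
  have hJf : ∀ i, f i ∈ J := fun i => Ideal.subset_span ⟨i, rfl⟩
  have h1 : ∀ x y, φ (x + y) = φ x + φ y := by
    intro x y
    show Ideal.Quotient.mk J ((1 - T 1) * (x + y)) = _
    rw [mul_add, map_add]
  have h2 : ∀ r x, φ (r * x) = Ideal.Quotient.mk J r * φ x := by
    intro r x
    show Ideal.Quotient.mk J ((1 - T 1) * (r * x)) = _
    rw [show (1 - T 1) * (r * x) = r * ((1 - T 1) * x) by ring, map_mul]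
  have hmkfac : ∀ x, φ x = (1 - Ideal.Quotient.mk J (T 1)) * Ideal.Quotient.mk J x := by
    intro x
    show Ideal.Quotient.mk J ((1 - T 1) * x) = _
    rw [map_mul, map_sub, map_one]
  have h3 : Set.range φ =
      {y : LaurentPolynomial ℤ ⧸ J | ∃ x, y = (1 - Ideal.Quotient.mk J (T 1)) * x} := by
    ext y
    constructor
    · rintro ⟨x, rfl⟩
      exact ⟨Ideal.Quotient.mk J x, hmkfac x⟩
    · rintro ⟨x, rfl⟩
      obtain ⟨x', rfl⟩ := Ideal.Quotient.mk_surjective x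
      exact ⟨x', (hmkfac x').symm⟩
  have hker : ∀ x, φ x = 0 ↔ ∃ j ∈ J, ∃ g ∈ Iset, x = j + g := by
    intro x
    show Ideal.Quotient.mk J ((1 - T 1) * x) = 0 ↔ _
    rw [Ideal.Quotient.eq_zero_iff_mem]
    constructor
    · intro hx
      rw [show J = Ideal.span (Set.range f) from rfl, Ideal.span,
        Submodule.mem_span_range_iff_exists_fun] at hx
      obtain ⟨a, ha⟩ := hx
      simp only [smul_eq_mul] at ha
      choose q hq using fun i => decomp (a i)
      have heval : ∑ i, evalOne (a i) * evalOne (f i) = 0 := by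
        have h := congrArg evalOne ha
        rw [map_sum] at h
        simpa [map_mul, map_sub, map_one, evalOne_T] using h
      have hsum0 : ∑ i, ((evalOne (a i) : ℤ) : LaurentPolynomial ℤ)
          * ((evalOne (f i) : ℤ) : LaurentPolynomial ℤ) = 0 := by
        have h := congrArg (fun z : ℤ => (z : LaurentPolynomial ℤ)) heval
        push_cast at h
        simpa using h
      refine ⟨∑ i, q i * f i,
        Ideal.sum_mem _ (fun i _ => Ideal.mul_mem_left _ _ (hJf i)),
        ∑ i, ((evalOne (a i) : ℤ) : LaurentPolynomial ℤ) * ft i,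
        ⟨fun i => ((evalOne (a i) : ℤ) : LaurentPolynomial ℤ), rfl, hsum0⟩, ?_⟩
      apply mul_left_cancel₀ one_sub_T_ne_zero
      rw [← ha]
      have expand : ∀ i, a i * f i
          = (1 - T 1) * (q i * f i + ((evalOne (a i) : ℤ) : LaurentPolynomial ℤ) * ft i)
            + ((evalOne (a i) : ℤ) : LaurentPolynomial ℤ)
              * ((evalOne (f i) : ℤ) : LaurentPolynomial ℤ) := by
        intro i
        linear_combination f i * hq i + ((evalOne (a i) : ℤ) : LaurentPolynomial ℤ) * hft i
      calc ∑ i, a i * f i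
          = ∑ i, ((1 - T 1) * (q i * f i + ((evalOne (a i) : ℤ) : LaurentPolynomial ℤ) * ft i)
              + ((evalOne (a i) : ℤ) : LaurentPolynomial ℤ)
                * ((evalOne (f i) : ℤ) : LaurentPolynomial ℤ)) :=
            Finset.sum_congr rfl fun i _ => expand i
        _ = (1 - T 1) * (∑ i, q i * f i
              + ∑ i, ((evalOne (a i) : ℤ) : LaurentPolynomial ℤ) * ft i) := by
            rw [Finset.sum_add_distrib, hsum0, add_zero, ← Finset.mul_sum,
              Finset.sum_add_distrib]
    · rintro ⟨j, hj, g, ⟨a, rfl, ha0⟩, rfl⟩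
      have hsplit : (1 - T 1) * (j + ∑ i, a i * ft i)
          = (1 - T 1) * j
            + (∑ i, a i * f i
              - ∑ i, a i * ((evalOne (f i) : ℤ) : LaurentPolynomial ℤ)) := by
        rw [mul_add]
        congr 1
        rw [Finset.mul_sum, ← Finset.sum_sub_distrib]
        exact Finset.sum_congr rfl fun i _ => by linear_combination (-(a i)) * hft i
      rw [hsplit, ha0, sub_zero]
      exact Ideal.add_mem _ (Ideal.mul_mem_left _ _ hj)
        (Ideal.sum_mem _ fun i _ => Ideal.mul_mem_left _ _ (hJf i))
  refine ⟨h1, h2, h3, hker, ?_⟩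
  intro c
  set K : Ideal (LaurentPolynomial ℤ) := J ⊔ Ideal.span Iset with hK
  have hsmul : ∀ (r : LaurentPolynomial ℤ) (y : LaurentPolynomial ℤ ⧸ J),
      r • y = Ideal.Quotient.mk J r * y := by
    intro r y
    obtain ⟨z, rfl⟩ := Ideal.Quotient.mk_surjective y
    rw [← map_mul]
    rfl
  letI L : LaurentPolynomial ℤ →ₗ[LaurentPolynomial ℤ] (LaurentPolynomial ℤ ⧸ J) :=
    { toFun := φ
      map_add' := h1
      map_smul' := by
        intro r x
        simp only [RingHom.id_apply, smul_eq_mul]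
        rw [h2 r x, hsmul] }
  have hKL : LinearMap.ker L = K := by
    apply le_antisymm
    · intro x hx
      rw [LinearMap.mem_ker] at hx
      obtain ⟨j, hj, g, hg, rfl⟩ := (hker x).mp hx
      exact K.add_mem (Ideal.mem_sup_left hj) (Ideal.mem_sup_right (Ideal.subset_span hg))
    · rw [hK]
      apply sup_le
      · intro x hx
        rw [LinearMap.mem_ker]
        exact (hker x).mpr ⟨x, hx, 0, ⟨0, by simp, by simp⟩, by simp⟩
      · rw [Ideal.span_le]
        intro g hg
        rw [SetLike.mem_coe, LinearMap.mem_ker]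
        exact (hker g).mpr ⟨0, J.zero_mem, g, hg, by simp⟩
  letI L' := Submodule.liftQ K L hKL.ge
  have hinj : Function.Injective L' := by
    rw [← LinearMap.ker_eq_bot]
    exact Submodule.ker_liftQ_eq_bot K L hKL.ge hKL.le
  have hLval : ∀ x, L' (Ideal.Quotient.mk K x) = φ x := fun x => Submodule.liftQ_apply K L x
  have hstep : ∀ m : LaurentPolynomial ℤ ⧸ J,
      qRel J c (c + (1 - Ideal.Quotient.mk J (T 1)) * m) := by
    intro m
    refine Relation.EqvGen.rel _ _ ⟨c + m, ?_⟩
    show Ideal.Quotient.mk J (T 1) * c + (1 - Ideal.Quotient.mk J (T 1)) * (c + m) = _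
    ring
  have hmem : ∀ u : LaurentPolynomial ℤ ⧸ K, qRel J c (c + L' u) := by
    intro u
    obtain ⟨x, rfl⟩ := Ideal.Quotient.mk_surjective u
    rw [hLval, hmkfac]
    exact hstep _
  letI G : (LaurentPolynomial ℤ ⧸ K) → {y // qRel J c y} := fun u => ⟨c + L' u, hmem u⟩
  have hGinj : Function.Injective G := by
    intro u v h
    apply hinj
    have := congrArg Subtype.val h
    exact add_left_cancel (show c + L' u = c + L' v from this)
  have hGsurj : Function.Surjective G := by
    rintro ⟨y, hy⟩
    have hgen : ∀ {a b : LaurentPolynomial ℤ ⧸ J}, qRel J a b →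
        ∃ m, b = a + (1 - Ideal.Quotient.mk J (T 1)) * m := by
      intro a b h
      induction h with
      | rel x y hxy =>
        obtain ⟨d, hd⟩ := hxy
        refine ⟨d - x, ?_⟩
        rw [← hd]
        show Ideal.Quotient.mk J (T 1) * x + (1 - Ideal.Quotient.mk J (T 1)) * d = _
        ring
      | refl x => exact ⟨0, by ring⟩
      | symm x y h ih =>
        obtain ⟨m, hm⟩ := ih
        exact ⟨-m, by rw [hm]; ring⟩
      | trans x y z h1' h2' ih1 ih2 =>
        obtain ⟨m1, hm1⟩ := ih1
        obtain ⟨m2, hm2⟩ := ih2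
        exact ⟨m1 + m2, by rw [hm2, hm1]; ring⟩
    obtain ⟨m, hm⟩ := hgen hy
    obtain ⟨x, rfl⟩ := Ideal.Quotient.mk_surjective m
    refine ⟨Ideal.Quotient.mk K x, Subtype.ext ?_⟩
    show c + L' (Ideal.Quotient.mk K x) = y
    rw [hLval, hmkfac, hm]
  refine ⟨Equiv.ofBijective G ⟨hGinj, hGsurj⟩, ?_⟩
  intro u v
  obtain ⟨x, rfl⟩ := Ideal.Quotient.mk_surjective u
  obtain ⟨y, rfl⟩ := Ideal.Quotient.mk_surjective v
  have hq1 : qOp K (Ideal.Quotient.mk K x) (Ideal.Quotient.mk K y)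
      = Ideal.Quotient.mk K (T 1 * x + (1 - T 1) * y) := by
    show Ideal.Quotient.mk K (T 1) * Ideal.Quotient.mk K x
        + (1 - Ideal.Quotient.mk K (T 1)) * Ideal.Quotient.mk K y = _
    rw [map_add, map_mul, map_mul, map_sub, map_one]
  rw [hq1]
  show c + L' (Ideal.Quotient.mk K (T 1 * x + (1 - T 1) * y))
      = qOp J (c + L' (Ideal.Quotient.mk K x)) (c + L' (Ideal.Quotient.mk K y))
  rw [hLval, hLval, hLval, hmkfac, hmkfac, hmkfac]
  show c + (1 - Ideal.Quotient.mk J (T 1)) * Ideal.Quotient.mk J (T 1 * x + (1 - T 1) * y)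
      = Ideal.Quotient.mk J (T 1) * (c + (1 - Ideal.Quotient.mk J (T 1)) * Ideal.Quotient.mk J x)
        + (1 - Ideal.Quotient.mk J (T 1))
          * (c + (1 - Ideal.Quotient.mk J (T 1)) * Ideal.Quotient.mk J y)
  rw [map_add, map_mul, map_mul, map_sub, map_one]
  ring
end

section
/- Let X be a quandle and let {A_i}_{i∈I} be a family of connected subquandles of X with nonempty common intersection. Then the subquandle ⟨⋃_i A_i⟩ generated by their union is a connected subquandle of X. -/
/-- A quandle structure. -/
structure QuandleStr (X : Type*) where
  op : X → X → X
  idem : ∀ a, op a a = a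
  bij : ∀ a, Function.Bijective fun x => op x a
  distrib : ∀ a b c, op (op a b) c = op (op a c) (op b c)

/-- `A` is a subquandle: a nonempty subset closed under `*` and under `*⁻¹`
(i.e. the unique `x` with `x * b = a` belongs to `A` whenever `a, b ∈ A`). -/
def IsSubquandle {X : Type*} (op : X → X → X) (A : Set X) : Prop :=
  A.Nonempty ∧ (∀ a ∈ A, ∀ b ∈ A, op a b ∈ A) ∧
    (∀ a ∈ A, ∀ b ∈ A, ∀ x, op x b = a → x ∈ A)

/-- `A` is connected: any two elements of `A` are related by a finite
composition of the maps `S_c^{±1}` with `c ∈ A`. -/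
def ConnOn {X : Type*} (op : X → X → X) (A : Set X) : Prop :=
  ∀ a ∈ A, ∀ b ∈ A, Relation.EqvGen (fun x y => ∃ c ∈ A, op x c = y) a b

/-- The subquandle generated by a subset: the smallest subquandle containing it. -/
def genSub {X : Type*} (op : X → X → X) (A : Set X) : Set X :=
  ⋂₀ {S | IsSubquandle op S ∧ A ⊆ S}

/-- If `{A_i}` is a family of connected subquandles of a quandle `X` with
nonempty common intersection, then the subquandle `⟨⋃ A_i⟩` generated by their
union is a connected subquandle of `X`. -/
theorem stmt_12 {X : Type*} (Q : QuandleStr X) {ι : Type*} [Nonempty ι]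
    (A : ι → Set X)
    (hsub : ∀ i, IsSubquandle Q.op (A i)) (hconn : ∀ i, ConnOn Q.op (A i))
    (hint : (⋂ i, A i).Nonempty) :
    IsSubquandle Q.op (genSub Q.op (⋃ i, A i)) ∧ ConnOn Q.op (genSub Q.op (⋃ i, A i)) := by
  obtain ⟨p, hp⟩ := hint
  set U : Set X := ⋃ i, A i with hU
  have hpU : p ∈ U := Set.mem_iUnion.2 ⟨Classical.arbitrary ι, Set.mem_iInter.1 hp _⟩
  set G : Set X := genSub Q.op U with hGdef
  have hUG : U ⊆ G := by
    intro x hx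
    exact Set.mem_sInter.2 fun S hS => hS.2 hx
  have hGmem : ∀ x, x ∈ G ↔ ∀ S, IsSubquandle Q.op S ∧ U ⊆ S → x ∈ S := by
    intro x; exact Set.mem_sInter
  have hGsub : IsSubquandle Q.op G := by
    refine ⟨⟨p, hUG hpU⟩, ?_, ?_⟩
    · intro a ha b hb
      refine (hGmem _).2 fun S hS => hS.1.2.1 a ((hGmem a).1 ha S hS) b ((hGmem b).1 hb S hS)
    · intro a ha b hb x hx
      refine (hGmem _).2 fun S hS =>
        hS.1.2.2 a ((hGmem a).1 ha S hS) b ((hGmem b).1 hb S hS) x hx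
  set R : X → X → Prop := fun x y => ∃ c ∈ G, Q.op x c = y with hR
  set C : Set X := {x | x ∈ G ∧ Relation.EqvGen R x p} with hCdef
  have hpC : p ∈ C := ⟨hUG hpU, Relation.EqvGen.refl p⟩
  have hCsub : IsSubquandle Q.op C := by
    refine ⟨⟨p, hpC⟩, ?_, ?_⟩
    · intro a ha b hb
      refine ⟨hGsub.2.1 a ha.1 b hb.1, ?_⟩
      have h1 : Relation.EqvGen R (Q.op a b) a :=
        Relation.EqvGen.symm _ _ (Relation.EqvGen.rel a (Q.op a b) ⟨b, hb.1, rfl⟩)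
      exact Relation.EqvGen.trans _ _ _ h1 ha.2
    · intro a ha b hb x hx
      refine ⟨hGsub.2.2 a ha.1 b hb.1 x hx, ?_⟩
      have h1 : Relation.EqvGen R x a := Relation.EqvGen.rel x a ⟨b, hb.1, hx⟩
      exact Relation.EqvGen.trans _ _ _ h1 ha.2
  have hUC : U ⊆ C := by
    intro a haU
    obtain ⟨i, hai⟩ := Set.mem_iUnion.1 haU
    have hpi : p ∈ A i := Set.mem_iInter.1 hp i
    have h := hconn i a hai p hpi
    refine ⟨hUG haU, Relation.EqvGen.mono ?_ _ _ h⟩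
    rintro x y ⟨c, hc, hxy⟩
    exact ⟨c, hUG (Set.mem_iUnion.2 ⟨i, hc⟩), hxy⟩
  have hGC : G ⊆ C := Set.sInter_subset_of_mem ⟨hCsub, hUC⟩
  refine ⟨hGsub, ?_⟩
  intro a ha b hb
  exact Relation.EqvGen.trans _ _ _ (hGC ha).2 (Relation.EqvGen.symm _ _ (hGC hb).2)
end

section
/- Let X be a quandle and let A₁, A₂ be maximal connected subquandles of X. If A₁ ∩ A₂ ≠ ∅ then A₁ = A₂. -/
/-- `A` is a maximal connected subquandle: the only connected subquandle
containing `A` is `A` itself. -/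
def IsMaxConn {X : Type*} (op : X → X → X) (A : Set X) : Prop :=
  IsSubquandle op A ∧ ConnOn op A ∧
    ∀ B, IsSubquandle op B → ConnOn op B → A ⊆ B → B = A

/-- The subquandle closure of a set `S`. -/
inductive Cl {X : Type*} (op : X → X → X) (S : Set X) : X → Prop
  | base {x} : x ∈ S → Cl op S x
  | mul {a b} : Cl op S a → Cl op S b → Cl op S (op a b)
  | inv {x b a} : Cl op S a → Cl op S b → op x b = a → Cl op S x

/-- If two maximal connected subquandles of a quandle intersect, they are equal. -/
theorem stmt_13 {X : Type*} (Q : QuandleStr X) (A₁ A₂ : Set X)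
    (h₁ : IsMaxConn Q.op A₁) (h₂ : IsMaxConn Q.op A₂)
    (h : (A₁ ∩ A₂).Nonempty) : A₁ = A₂ := by
  obtain ⟨p, hp1, hp2⟩ := h
  set B : Set X := {x | Cl Q.op (A₁ ∪ A₂) x} with hBdef
  have hsub : IsSubquandle Q.op B :=
    ⟨⟨p, Cl.base (Or.inl hp1)⟩, fun a ha b hb => Cl.mul ha hb,
      fun a ha b hb x hx => Cl.inv ha hb hx⟩
  have key : ∀ x ∈ B, Relation.EqvGen (fun x y => ∃ c ∈ B, Q.op x c = y) x p := by
    intro x hx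
    induction hx with
    | base hx =>
      rcases hx with hx | hx
      · exact (h₁.2.1 _ hx p hp1).mono
          (fun a b ⟨c, hc, e⟩ => ⟨c, Cl.base (Or.inl hc), e⟩)
      · exact (h₂.2.1 _ hx p hp2).mono
          (fun a b ⟨c, hc, e⟩ => ⟨c, Cl.base (Or.inr hc), e⟩)
    | mul ha hb iha ihb =>
      exact .trans _ _ _ (.symm _ _ (.rel _ _ ⟨_, hb, rfl⟩)) iha
    | inv ha hb he iha ihb =>
      exact .trans _ _ _ (.rel _ _ ⟨_, hb, he⟩) iha
  have hconn : ConnOn Q.op B := fun a ha b hb =>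
    .trans _ _ _ (key a ha) (.symm _ _ (key b hb))
  have e1 : B = A₁ := h₁.2.2 B hsub hconn (fun x hx => Cl.base (Or.inl hx))
  have e2 : B = A₂ := h₂.2.2 B hsub hconn (fun x hx => Cl.base (Or.inr hx))
  rw [← e1, e2]
end

section
/- Every quandle X admits a unique partition into maximal connected subquandles; that is, X is the disjoint union of maximal connected subquandles, and this decomposition is unique. -/
section Aux

variable {X : Type*}

/-- The subquandle generated by a set. -/
inductive Gen (Q : QuandleStr X) (U : Set X) : X → Prop
  | base {x} : x ∈ U → Gen Q U x
  | opm {a b} : Gen Q U a → Gen Q U b → Gen Q U (Q.op a b)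
  | inv {a b x} : Gen Q U a → Gen Q U b → Q.op x b = a → Gen Q U x

/-- Union of all connected subquandles containing `x`. -/
def bigU (Q : QuandleStr X) (x : X) : Set X :=
  {z | ∃ A, IsSubquandle Q.op A ∧ ConnOn Q.op A ∧ x ∈ A ∧ z ∈ A}

/-- The maximal connected subquandle containing `x`. -/
def Mx (Q : QuandleStr X) (x : X) : Set X := {z | Gen Q (bigU Q x) z}

lemma singleton_sub (Q : QuandleStr X) (x : X) : IsSubquandle Q.op {x} := by
  refine ⟨⟨x, rfl⟩, ?_, ?_⟩
  · rintro a ha b hb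
    rw [Set.mem_singleton_iff] at ha hb
    simp [ha, hb, Q.idem]
  · rintro a ha b hb z hz
    rw [Set.mem_singleton_iff] at ha hb
    rw [ha, hb] at hz
    have : z = x := (Q.bij x).1 (by simpa [Q.idem] using hz)
    simp [this]

lemma singleton_conn (Q : QuandleStr X) (x : X) : ConnOn Q.op {x} := by
  intro a ha b hb
  rw [Set.mem_singleton_iff] at ha hb
  rw [ha, hb]
  exact Relation.EqvGen.refl x

lemma mem_Mx_self (Q : QuandleStr X) (x : X) : x ∈ Mx Q x :=
  Gen.base ⟨{x}, singleton_sub Q x, singleton_conn Q x, rfl, rfl⟩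

lemma Mx_subquandle (Q : QuandleStr X) (x : X) : IsSubquandle Q.op (Mx Q x) :=
  ⟨⟨x, mem_Mx_self Q x⟩, fun _ ha _ hb => Gen.opm ha hb,
    fun _ ha _ hb _ hz => Gen.inv ha hb hz⟩

lemma Mx_key (Q : QuandleStr X) (x : X) : ∀ z ∈ Mx Q x,
    Relation.EqvGen (fun u v => ∃ c ∈ Mx Q x, Q.op u c = v) z x := by
  intro z hz
  induction hz with
  | @base w hw =>
    obtain ⟨A, hAs, hAc, hxA, hwA⟩ := hw
    have hsub : A ⊆ Mx Q x := fun u hu => Gen.base ⟨A, hAs, hAc, hxA, hu⟩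
    exact (hAc w hwA x hxA).mono (fun u v ⟨c, hc, hcop⟩ => ⟨c, hsub hc, hcop⟩)
  | @opm a b ha hb iha ihb =>
    refine Relation.EqvGen.trans _ a _ ?_ iha
    exact Relation.EqvGen.symm _ _ (Relation.EqvGen.rel _ _ ⟨b, hb, rfl⟩)
  | @inv a b z ha hb hop ihb iha =>
    exact Relation.EqvGen.trans _ a _ (Relation.EqvGen.rel _ _ ⟨b, hb, hop⟩) ihb

lemma Mx_conn (Q : QuandleStr X) (x : X) : ConnOn Q.op (Mx Q x) := by
  intro a ha b hb
  exact Relation.EqvGen.trans _ x _ (Mx_key Q x a ha)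
    (Relation.EqvGen.symm _ _ (Mx_key Q x b hb))

lemma subset_Mx (Q : QuandleStr X) {x : X} {A : Set X} (hAs : IsSubquandle Q.op A)
    (hAc : ConnOn Q.op A) (hx : x ∈ A) : A ⊆ Mx Q x :=
  fun z hz => Gen.base ⟨A, hAs, hAc, hx, hz⟩

lemma Mx_maxConn (Q : QuandleStr X) (x : X) : IsMaxConn Q.op (Mx Q x) := by
  refine ⟨Mx_subquandle Q x, Mx_conn Q x, ?_⟩
  intro B hBs hBc hMB
  exact Set.Subset.antisymm (subset_Mx Q hBs hBc (hMB (mem_Mx_self Q x))) hMB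

lemma eq_Mx (Q : QuandleStr X) {x : X} {A : Set X} (hA : IsMaxConn Q.op A)
    (hx : x ∈ A) : A = Mx Q x :=
  (hA.2.2 (Mx Q x) (Mx_subquandle Q x) (Mx_conn Q x) (subset_Mx Q hA.1 hA.2.1 hx)).symm

lemma Mx_mem_eq (Q : QuandleStr X) {x y : X} (h : x ∈ Mx Q y) : Mx Q y = Mx Q x :=
  eq_Mx Q (Mx_maxConn Q y) h

end Aux

/-- Every quandle admits a unique partition into maximal connected subquandles:
there is a unique collection `P` of maximal connected subquandles such that
every element of `X` lies in exactly one member of `P`. -/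
theorem stmt_14 {X : Type*} (Q : QuandleStr X) :
    ∃! P : Set (Set X),
      (∀ A ∈ P, IsMaxConn Q.op A) ∧ ∀ x : X, ∃! A, A ∈ P ∧ x ∈ A := by
  refine ⟨{A | ∃ x, A = Mx Q x}, ⟨?_, ?_⟩, ?_⟩
  · rintro A ⟨x, rfl⟩
    exact Mx_maxConn Q x
  · intro x
    refine ⟨Mx Q x, ⟨⟨x, rfl⟩, mem_Mx_self Q x⟩, ?_⟩
    rintro A ⟨⟨y, rfl⟩, hxA⟩
    exact Mx_mem_eq Q hxA
  · rintro P' ⟨h1, h2⟩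
    ext A
    constructor
    · intro hA
      obtain ⟨x, hx⟩ := (h1 A hA).1.1
      exact ⟨x, eq_Mx Q (h1 A hA) hx⟩
    · rintro ⟨x, rfl⟩
      obtain ⟨B, ⟨hBP, hxB⟩, -⟩ := h2 x
      have hB : B = Mx Q x := eq_Mx Q (h1 B hBP) hxB
      rwa [← hB]
end

section
/- Let n₀ > 0, a ∈ Z, and define n_{i+1} = n_i / gcd(n_i, 1+a). Let l be minimal with n_l = n_{l+1}. Then the Alexander quandle Z[t^{±1}]/(n₀, t+a) decomposes into exactly N = Π_{i=0}^{l−1} gcd(n_i, 1+a) maximal connected subquandles, each isomorphic to Z[t^{±1}]/(n_l, t+a). -/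
open LaurentPolynomial

/-- The ideal `(m, t + a)` of `ℤ[t,t⁻¹]`. -/
noncomputable def idl (m a : ℤ) : Ideal (LaurentPolynomial ℤ) :=
  Ideal.span {(m : LaurentPolynomial ℤ), T 1 + (a : LaurentPolynomial ℤ)}

/-! ### Auxiliary development: the map `ℤ → ℤ[t,t⁻¹]⧸(m, t+a)` -/

/-- The canonical ring map `ℤ → ℤ[t,t⁻¹]⧸(m,t+a)`. -/
noncomputable def pim (a m : ℤ) : ℤ →+* LaurentPolynomial ℤ ⧸ idl m a :=
  (Ideal.Quotient.mk (idl m a)).comp (Int.castRingHom _)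

lemma pim_apply (a m z : ℤ) :
    pim a m z = Ideal.Quotient.mk (idl m a) (z : LaurentPolynomial ℤ) := rfl

lemma mk_m (a m : ℤ) : Ideal.Quotient.mk (idl m a) (m : LaurentPolynomial ℤ) = 0 := by
  rw [Ideal.Quotient.eq_zero_iff_mem, idl]
  exact Ideal.subset_span (by simp)

lemma mk_T1 (a m : ℤ) : Ideal.Quotient.mk (idl m a) (T 1) = pim a m (-a) := by
  rw [pim_apply, Ideal.Quotient.mk_eq_mk_iff_sub_mem]
  have : (T 1 : LaurentPolynomial ℤ) - ((-a : ℤ) : LaurentPolynomial ℤ)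
      = T 1 + (a : LaurentPolynomial ℤ) := by push_cast; ring
  rw [this, idl]
  exact Ideal.subset_span (by simp)

lemma mk_toLaurent (a m : ℤ) (q : Polynomial ℤ) :
    Ideal.Quotient.mk (idl m a) (Polynomial.toLaurent q) = pim a m (q.eval (-a)) := by
  have : (Ideal.Quotient.mk (idl m a)).comp Polynomial.toLaurent
      = (pim a m).comp (Polynomial.evalRingHom (-a)) := by
    apply Polynomial.ringHom_ext
    · intro z
      simp only [RingHom.comp_apply, Polynomial.toLaurent_C, Polynomial.coe_evalRingHom,
        Polynomial.eval_C]
      rw [pim_apply]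
      congr 1
    · simp only [RingHom.comp_apply, Polynomial.toLaurent_X, Polynomial.coe_evalRingHom,
        Polynomial.eval_X]
      exact mk_T1 a m
  exact DFunLike.congr_fun this q

lemma pim_eq_zero_iff (a m z : ℤ) :
    pim a m z = 0 ↔ ∃ r : ℕ, m ∣ z * a ^ r := by
  constructor
  · intro h
    rw [pim_apply, Ideal.Quotient.eq_zero_iff_mem, idl, Ideal.mem_span_pair] at h
    obtain ⟨p, q, hpq⟩ := h
    obtain ⟨M₁, p₁, hp₁⟩ := p.exists_T_pow
    obtain ⟨M₂, q₁, hq₁⟩ := q.exists_T_pow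
    have key : Polynomial.toLaurent (Polynomial.C z * Polynomial.X ^ (M₁ + M₂)) =
        Polynomial.toLaurent (p₁ * Polynomial.X ^ M₂ * Polynomial.C m
          + q₁ * Polynomial.X ^ M₁ * (Polynomial.X + Polynomial.C a)) := by
      simp only [map_add, map_mul, map_pow, Polynomial.toLaurent_C, Polynomial.toLaurent_X,
        hp₁, hq₁]
      have hz : (LaurentPolynomial.C z : LaurentPolynomial ℤ) = (z : LaurentPolynomial ℤ) := by
        rw [← map_intCast (LaurentPolynomial.C : ℤ →+* LaurentPolynomial ℤ) z]; simp
      have ha : (LaurentPolynomial.C a : LaurentPolynomial ℤ) = (a : LaurentPolynomial ℤ) := by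
        rw [← map_intCast (LaurentPolynomial.C : ℤ →+* LaurentPolynomial ℤ) a]; simp
      have hm : (LaurentPolynomial.C m : LaurentPolynomial ℤ) = (m : LaurentPolynomial ℤ) := by
        rw [← map_intCast (LaurentPolynomial.C : ℤ →+* LaurentPolynomial ℤ) m]; simp
      rw [hz, ha, hm, T_pow, T_pow, T_pow, ← hpq]
      push_cast
      rw [show ((M₁ : ℤ) + M₂) * 1 = (M₁ : ℤ) * 1 + M₂ * 1 by ring, T_add]
      ring
    have key2 := Polynomial.toLaurent_injective key
    have := congrArg (Polynomial.eval (-a)) key2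
    simp only [Polynomial.eval_mul, Polynomial.eval_pow, Polynomial.eval_C, Polynomial.eval_X,
      Polynomial.eval_add, neg_add_cancel, mul_zero, add_zero] at this
    refine ⟨M₁ + M₂, ?_⟩
    have hdvd : m ∣ z * (-a) ^ (M₁ + M₂) := Dvd.intro_left _ this.symm
    have : z * a ^ (M₁ + M₂) = z * (-a) ^ (M₁ + M₂) * (-1) ^ (M₁ + M₂) := by
      rw [mul_assoc, ← mul_pow]; ring_nf
    rw [this]
    exact hdvd.mul_right _
  · rintro ⟨r, w, hw⟩
    have hu : IsUnit ((Ideal.Quotient.mk (idl m a) (T 1))) := (isUnit_T 1).map _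
    have h1 : pim a m z * (- Ideal.Quotient.mk (idl m a) (T 1)) ^ r = 0 := by
      have : - Ideal.Quotient.mk (idl m a) (T 1) = pim a m a := by
        rw [mk_T1]; simp
      rw [this, ← map_pow, ← map_mul, hw, map_mul]
      rw [show pim a m m = 0 from mk_m a m]
      ring
    exact (hu.neg.pow r).mul_left_eq_zero.mp h1

lemma exists_pow_T_eq_one (a m : ℤ) (hm : m ≠ 0) :
    ∃ p : ℕ, 0 < p ∧ (Ideal.Quotient.mk (idl m a) (T 1)) ^ p = 1 := by
  haveI : NeZero m.natAbs := ⟨Int.natAbs_ne_zero.mpr hm⟩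
  obtain ⟨r, r', hne, heq⟩ :=
    Finite.exists_ne_map_eq_of_infinite (fun r : ℕ => ((-a : ℤ) : ZMod m.natAbs) ^ r)
  wlog hlt : r < r' generalizing r r'
  · exact this r' r hne.symm heq.symm (by omega)
  have hdvd : m ∣ (-a) ^ r' - (-a) ^ r := by
    have : (((-a) ^ r' - (-a) ^ r : ℤ) : ZMod m.natAbs) = 0 := by
      rw [Int.cast_sub, Int.cast_pow, Int.cast_pow, heq, sub_self]
    have := (ZMod.intCast_zmod_eq_zero_iff_dvd _ _).mp this
    exact (Int.natAbs_dvd).mp this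
  have hmk : (Ideal.Quotient.mk (idl m a) (T 1)) ^ r'
      = (Ideal.Quotient.mk (idl m a) (T 1)) ^ r := by
    rw [mk_T1, ← map_pow, ← map_pow, ← sub_eq_zero, ← map_sub, pim_eq_zero_iff]
    exact ⟨0, by simpa using hdvd⟩
  refine ⟨r' - r, by omega, ?_⟩
  have hu : IsUnit ((Ideal.Quotient.mk (idl m a) (T 1)) ^ r) := ((isUnit_T 1).map _).pow r
  have : (Ideal.Quotient.mk (idl m a) (T 1)) ^ r
      * ((Ideal.Quotient.mk (idl m a) (T 1)) ^ (r' - r) - 1) = 0 := by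
    rw [mul_sub, ← pow_add, mul_one]
    rw [show r + (r' - r) = r' by omega, hmk]
    ring
  exact sub_eq_zero.mp (hu.mul_right_eq_zero.mp this)

lemma pim_surjective (a m : ℤ) (hm : m ≠ 0) : Function.Surjective (pim a m) := by
  obtain ⟨p, hp, hTp⟩ := exists_pow_T_eq_one a m hm
  intro x
  obtain ⟨f, rfl⟩ := Ideal.Quotient.mk_surjective x
  obtain ⟨M, f', hf'⟩ := f.exists_T_pow
  refine ⟨f'.eval (-a) * (-a) ^ (M * (p - 1)), ?_⟩
  have h1 : pim a m (f'.eval (-a)) = Ideal.Quotient.mk (idl m a) f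
      * (Ideal.Quotient.mk (idl m a) (T 1)) ^ M := by
    rw [← mk_toLaurent, hf', map_mul]
    congr 1
    rw [← map_pow]
    congr 1
    rw [T_pow, mul_one]
  have h2 : pim a m ((-a) ^ (M * (p - 1)))
      = (Ideal.Quotient.mk (idl m a) (T 1)) ^ (M * (p - 1)) := by
    rw [mk_T1, map_pow]
  rw [map_mul, h1, h2, mul_assoc, ← pow_add]
  rw [show M + M * (p - 1) = M * p by cases p with
    | zero => omega
    | succ q => simp [Nat.succ_sub_one]; ring]
  rw [mul_comm M p, pow_mul, hTp, one_pow, mul_one]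

lemma qop_pim (a m x y : ℤ) :
    qOp (idl m a) (pim a m x) (pim a m y) = pim a m (-a * x + (1 + a) * y) := by
  rw [qOp, mk_T1, show (1 : LaurentPolynomial ℤ ⧸ idl m a) = pim a m 1 from (map_one _).symm,
    ← map_sub, ← map_mul, ← map_mul, ← map_add]
  congr 1
  ring

/-- Let `n₀ > 0`, `a ∈ ℤ`, `n_{i+1} = n_i / gcd(n_i, 1+a)`, and let `l` be
minimal with `n_l = n_{l+1}`.  Then the Alexander quandle `ℤ[t,t⁻¹]/(n₀, t+a)`
decomposes into exactly `N = Π_{i<l} gcd(n_i, 1+a)` maximal connected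
subquandles, each isomorphic as a quandle to `ℤ[t,t⁻¹]/(n_l, t+a)`. -/
theorem stmt_15 (a : ℤ) (n : ℕ → ℤ) (hn0 : 0 < n 0)
    (hrec : ∀ i, n (i + 1) = n i / (Int.gcd (n i) (1 + a) : ℤ))
    (l : ℕ) (hl : n l = n (l + 1)) (hlmin : ∀ j, n j = n (j + 1) → l ≤ j) :
    ∃ P : Set (Set (LaurentPolynomial ℤ ⧸ idl (n 0) a)),
      (∀ A ∈ P, IsMaxConn (qOp (idl (n 0) a)) A) ∧
      (∀ x, ∃! A, A ∈ P ∧ x ∈ A) ∧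
      P.ncard = ∏ i ∈ Finset.range l, Int.gcd (n i) (1 + a) ∧
      ∀ A ∈ P, ∃ e : (LaurentPolynomial ℤ ⧸ idl (n l) a) ≃ A,
        ∀ u v, (e (qOp (idl (n l) a) u v) : LaurentPolynomial ℤ ⧸ idl (n 0) a) =
          qOp (idl (n 0) a) (e u) (e v) := by
  clear hlmin
  -- Number theory on the sequence `n`
  have hfac : ∀ i, n i = (Int.gcd (n i) (1 + a) : ℤ) * n (i + 1) := by
    intro i
    rw [hrec i]
    exact (Int.mul_ediv_cancel' (Int.gcd_dvd_left _ _)).symm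
  have hnpos : ∀ i, 0 < n i := by
    intro i
    induction i with
    | zero => exact hn0
    | succ j ih =>
      have h := hfac j
      by_contra hle
      push_neg at hle
      have hg : (0 : ℤ) ≤ (Int.gcd (n j) (1 + a) : ℤ) := Int.natCast_nonneg _
      nlinarith
  have hgpos : ∀ i, 0 < Int.gcd (n i) (1 + a) := fun i =>
    Int.gcd_pos_of_ne_zero_left _ (hnpos i).ne'
  have hgl : Int.gcd (n l) (1 + a) = 1 := by
    have h := hfac l
    rw [← hl] at h
    have h1 : (1 : ℤ) * n l = (Int.gcd (n l) (1 + a) : ℤ) * n l := by linarith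
    have := mul_right_cancel₀ (hnpos l).ne' h1
    exact_mod_cast this.symm
  obtain ⟨N, hN⟩ : ∃ N : ℕ, N = ∏ i ∈ Finset.range l, Int.gcd (n i) (1 + a) := ⟨_, rfl⟩
  have hNjfac : ∀ j, n 0 = ((∏ i ∈ Finset.range j, Int.gcd (n i) (1 + a) : ℕ) : ℤ) * n j := by
    intro j
    induction j with
    | zero => simp
    | succ j ih =>
      rw [Finset.prod_range_succ]
      push_cast
      push_cast at ih
      linear_combination ih + (∏ i ∈ Finset.range j, ((n i).gcd (1 + a) : ℤ)) * hfac j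
  have hn0fac : n 0 = (N : ℤ) * n l := by rw [hN]; exact hNjfac l
  have hNpos : 0 < N := by rw [hN]; exact Finset.prod_pos (fun i _ => hgpos i)
  haveI : NeZero N := ⟨hNpos.ne'⟩
  have hcops_a : IsCoprime (1 + a : ℤ) a := ⟨1, -1, by ring⟩
  have hgdvd : ∀ i, (Int.gcd (n i) (1 + a) : ℤ) ∣ (1 + a) := fun i => Int.gcd_dvd_right _ _
  have hcopNa : IsCoprime ((N : ℤ)) a := by
    rw [hN]
    push_cast
    exact IsCoprime.prod_left (fun i _ => hcops_a.of_isCoprime_of_dvd_left (hgdvd i))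
  have hcopsnl : IsCoprime (1 + a : ℤ) (n l) := by
    rw [Int.isCoprime_iff_gcd_eq_one, Int.gcd_comm]; exact hgl
  -- The maps from ℤ
  set π := pim a (n 0) with hπdef
  set π' := pim a (n l) with hπ'def
  have hsurj : Function.Surjective π := pim_surjective a (n 0) hn0.ne'
  have hsurj' : Function.Surjective π' := pim_surjective a (n l) (hnpos l).ne'
  set k' : ℤ := Submodule.IsPrincipal.generator (RingHom.ker π') with hk'def
  have hker' : ∀ z : ℤ, π' z = 0 ↔ k' ∣ z := by
    intro z
    rw [hk'def, ← Submodule.IsPrincipal.mem_iff_generator_dvd, RingHom.mem_ker]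
  have hk'nl : k' ∣ n l := by
    rw [← hker']
    exact mk_m a (n l)
  have hcopsk' : IsCoprime (1 + a : ℤ) k' := hcopsnl.of_isCoprime_of_dvd_right hk'nl
  have hker : ∀ z : ℤ, π z = 0 ↔ ((N : ℤ) * k') ∣ z := by
    intro z
    rw [hπdef, pim_eq_zero_iff]
    constructor
    · rintro ⟨r, hr⟩
      rw [hn0fac] at hr
      have hNz : (N : ℤ) ∣ z := by
        have h1 : (N : ℤ) ∣ z * a ^ r := dvd_trans (dvd_mul_right _ _) hr
        exact (hcopNa.pow_right).dvd_of_dvd_mul_right h1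
      obtain ⟨z₁, rfl⟩ := hNz
      have h2 : n l ∣ z₁ * a ^ r := by
        have h3 : (N : ℤ) * n l ∣ (N : ℤ) * (z₁ * a ^ r) := by
          rw [show (N : ℤ) * (z₁ * a ^ r) = (N : ℤ) * z₁ * a ^ r by ring]; exact hr
        exact (mul_dvd_mul_iff_left (show (N : ℤ) ≠ 0 by exact_mod_cast hNpos.ne')).mp h3
      have h4 : k' ∣ z₁ := (hker' z₁).mp ((pim_eq_zero_iff a (n l) z₁).mpr ⟨r, h2⟩)
      exact mul_dvd_mul_left _ h4
    · rintro ⟨w, rfl⟩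
      have hk'0 : π' k' = 0 := (hker' k').mpr dvd_rfl
      rw [hπ'def, pim_eq_zero_iff] at hk'0
      obtain ⟨r, u, hu⟩ := hk'0
      refine ⟨r, u * w, ?_⟩
      rw [hn0fac]
      linear_combination (N : ℤ) * w * hu
  have hπeq : ∀ x y : ℤ, π x = π y ↔ ((N : ℤ) * k') ∣ (x - y) := by
    intro x y; rw [← sub_eq_zero, ← map_sub, hker]
  have hπ'eq : ∀ x y : ℤ, π' x = π' y ↔ k' ∣ (x - y) := by
    intro x y; rw [← sub_eq_zero, ← map_sub, hker']
  have hqop : ∀ x y : ℤ,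
      qOp (idl (n 0) a) (π x) (π y) = π (-a * x + (1 + a) * y) := fun x y => qop_pim a (n 0) x y
  have hqop' : ∀ x y : ℤ,
      qOp (idl (n l) a) (π' x) (π' y) = π' (-a * x + (1 + a) * y) := fun x y => qop_pim a (n l) x y
  have hNdvdk : (N : ℤ) ∣ (N : ℤ) * k' := dvd_mul_right _ _
  -- The pieces
  set Abar : ZMod N → Set (LaurentPolynomial ℤ ⧸ idl (n 0) a) :=
    fun c => {x | ∃ w : ℤ, π w = x ∧ (N : ℤ) ∣ w - (c.val : ℤ)} with hAbar
  have hmemiff : ∀ (z : ℤ) (c : ZMod N), π z ∈ Abar c ↔ (N : ℤ) ∣ z - (c.val : ℤ) := by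
    intro z c
    constructor
    · rintro ⟨w, hw, hwd⟩
      have h1 : (N : ℤ) ∣ w - z := dvd_trans hNdvdk ((hπeq w z).mp hw)
      have : z - (c.val : ℤ) = (w - (c.val : ℤ)) - (w - z) := by ring
      rw [this]
      exact dvd_sub hwd h1
    · intro h
      exact ⟨z, rfl, h⟩
  have hres : ∀ z : ℤ, (N : ℤ) ∣ z - (((z : ZMod N)).val : ℤ) := by
    intro z
    apply (ZMod.intCast_zmod_eq_zero_iff_dvd _ _).mp
    rw [Int.cast_sub, Int.cast_natCast, ZMod.natCast_rightInverse (z : ZMod N), sub_self]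
  have hval : ∀ c c' : ZMod N, (N : ℤ) ∣ ((c.val : ℤ) - (c'.val : ℤ)) → c = c' := by
    intro c c' h
    have hb1 := ZMod.val_lt c
    have hb2 := ZMod.val_lt c'
    have h0 : ((c.val : ℤ) - (c'.val : ℤ)) = 0 := by
      apply Int.eq_zero_of_abs_lt_dvd h
      rw [abs_lt]
      constructor <;> omega
    have : c.val = c'.val := by omega
    exact Function.LeftInverse.injective ZMod.natCast_rightInverse this
  -- subquandle
  have hsub : ∀ c : ZMod N, IsSubquandle (qOp (idl (n 0) a)) (Abar c) := by
    intro c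
    refine ⟨⟨π c.val, (hmemiff _ _).mpr (by simp)⟩, ?_, ?_⟩
    · rintro x ⟨zx, rfl, hx⟩ y ⟨zy, rfl, hy⟩
      rw [hqop]
      refine (hmemiff _ _).mpr ?_
      have : -a * zx + (1 + a) * zy - (c.val : ℤ)
          = -a * (zx - (c.val : ℤ)) + (1 + a) * (zy - (c.val : ℤ)) := by ring
      rw [this]
      exact dvd_add (hx.mul_left _) (hy.mul_left _)
    · rintro x ⟨zx, rfl, hx⟩ y ⟨zy, rfl, hy⟩ w hw
      obtain ⟨zw, rfl⟩ := hsurj w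
      rw [hqop, hπeq] at hw
      have hNd : (N : ℤ) ∣ (-a * zw + (1 + a) * zy - zx) := dvd_trans hNdvdk hw
      refine (hmemiff _ _).mpr ?_
      have key : (N : ℤ) ∣ a * (zw - (c.val : ℤ)) := by
        have heq : a * (zw - (c.val : ℤ)) = -(-a * zw + (1 + a) * zy - zx)
            + (1 + a) * (zy - (c.val : ℤ)) - (zx - (c.val : ℤ)) := by ring
        rw [heq]
        exact dvd_sub (dvd_add (dvd_neg.mpr hNd) (hy.mul_left _)) hx
      exact hcopNa.dvd_of_dvd_mul_left key
  -- connectivity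
  have hconn : ∀ c : ZMod N, ConnOn (qOp (idl (n 0) a)) (Abar c) := by
    intro c x hx y hy
    obtain ⟨zx, rfl, hxd⟩ := hx
    obtain ⟨zy, rfl, hyd⟩ := hy
    have hdxy : (N : ℤ) ∣ zy - zx := by
      have := dvd_sub hyd hxd
      simpa using this
    obtain ⟨d, hd⟩ := hdxy
    obtain ⟨u, v, huv⟩ := hcopsk'
    refine Relation.EqvGen.rel _ _ ⟨π (zx + N * (u * d)), ?_, ?_⟩
    · refine (hmemiff _ _).mpr ?_
      have : zx + (N : ℤ) * (u * d) - (c.val : ℤ) = (zx - (c.val : ℤ)) + (N : ℤ) * (u * d) := by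
        ring
      rw [this]
      exact dvd_add hxd (dvd_mul_right _ _)
    · rw [hqop, hπeq]
      exact ⟨-(v * d), by linear_combination (-1 : ℤ) * hd + (N : ℤ) * d * huv⟩
  -- the key congruence claim
  have hNjdvdN : ∀ j, j ≤ l →
      ((∏ i ∈ Finset.range j, Int.gcd (n i) (1 + a) : ℕ) : ℤ) ∣ (N : ℤ) := by
    intro j hj
    rw [hN]
    exact_mod_cast Int.natCast_dvd_natCast.mpr
      (Finset.prod_dvd_prod_of_subset _ _ _ (Finset.range_subset_range.mpr hj))
  have hclaim : ∀ B : Set (LaurentPolynomial ℤ ⧸ idl (n 0) a),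
      IsSubquandle (qOp (idl (n 0) a)) B → ConnOn (qOp (idl (n 0) a)) B →
      ∀ j, j ≤ l → ∀ u v : ℤ, π u ∈ B → π v ∈ B →
      ((∏ i ∈ Finset.range j, Int.gcd (n i) (1 + a) : ℕ) : ℤ) ∣ u - v := by
    intro B hB hBc j
    induction j with
    | zero => intro _ u v _ _; simp
    | succ j ih =>
      intro hj u v hu hv
      set M : ℤ := ((∏ i ∈ Finset.range (j + 1), Int.gcd (n i) (1 + a) : ℕ) : ℤ) with hM
      have hMdvdN : M ∣ (N : ℤ) := hNjdvdN _ hj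
      have hMfac : M = ((∏ i ∈ Finset.range j, Int.gcd (n i) (1 + a) : ℕ) : ℤ)
          * (Int.gcd (n j) (1 + a) : ℤ) := by
        rw [hM, Finset.prod_range_succ]
        push_cast
        ring
      have hcopMa : IsCoprime M a := hcopNa.of_isCoprime_of_dvd_left hMdvdN
      have hMdvdk : M ∣ (N : ℤ) * k' := hMdvdN.trans hNdvdk
      have key : ∀ x y, Relation.EqvGen (fun x y => ∃ c ∈ B, qOp (idl (n 0) a) x c = y) x y →
          ∀ p q : ℤ, π p = x → π q = y → (M ∣ p - u ↔ M ∣ q - u) := by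
        intro x y hxy
        induction hxy with
        | rel x y hr =>
          intro p q hp hq
          obtain ⟨cB, hcB, hopc⟩ := hr
          obtain ⟨w, rfl⟩ := hsurj cB
          rw [← hp, hqop, ← hq, hπeq] at hopc
          have hMq : M ∣ (-a * p + (1 + a) * w) - q := hMdvdk.trans hopc
          have hwu : ((∏ i ∈ Finset.range j, Int.gcd (n i) (1 + a) : ℕ) : ℤ) ∣ w - u :=
            ih (by omega) w u hcB hu
          have hsw : M ∣ (1 + a) * (w - u) := by
            rw [hMfac, mul_comm ((1 : ℤ) + a) (w - u)]
            exact mul_dvd_mul hwu (hgdvd j)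
          have hrel : M ∣ (q - u) - (-a) * (p - u) := by
            have heq : (q - u) - (-a) * (p - u)
                = -((-a * p + (1 + a) * w) - q) + (1 + a) * (w - u) := by ring
            rw [heq]
            exact dvd_add (dvd_neg.mpr hMq) hsw
          constructor
          · intro h
            have h1 : M ∣ (-a) * (p - u) := h.mul_left _
            have : q - u = ((q - u) - (-a) * (p - u)) + (-a) * (p - u) := by ring
            rw [this]
            exact dvd_add hrel h1
          · intro h
            have h1 : M ∣ (-a) * (p - u) := by
              have heq : (-a) * (p - u) = (q - u) - ((q - u) - (-a) * (p - u)) := by ring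
              rw [heq]
              exact dvd_sub h hrel
            have h2 : M ∣ a * (p - u) := by
              have : a * (p - u) = -((-a) * (p - u)) := by ring
              rw [this]
              exact dvd_neg.mpr h1
            exact hcopMa.dvd_of_dvd_mul_left h2
        | refl x =>
          intro p q hp hq
          have hpq : π p = π q := by rw [hp, hq]
          have h1 : M ∣ p - q := hMdvdk.trans ((hπeq p q).mp hpq)
          constructor
          · intro h
            have : q - u = (p - u) - (p - q) := by ring
            rw [this]; exact dvd_sub h h1
          · intro h
            have : p - u = (q - u) + (p - q) := by ring
            rw [this]; exact dvd_add h h1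
        | symm x y hxy ihxy =>
          intro p q hp hq
          exact (ihxy q p hq hp).symm
        | trans x y z hxy hyz ih1 ih2 =>
          intro p q hp hq
          obtain ⟨w, hw⟩ := hsurj y
          exact (ih1 p w hp hw).trans (ih2 w q hw hq)
      have h0 : M ∣ u - u := by simp
      have hfin := (key _ _ (hBc (π u) hu (π v) hv) u v rfl rfl).mp h0
      exact (dvd_sub_comm).mp hfin
  -- maximality
  have hmax : ∀ c : ZMod N, ∀ B, IsSubquandle (qOp (idl (n 0) a)) B →
      ConnOn (qOp (idl (n 0) a)) B → Abar c ⊆ B → B = Abar c := by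
    intro c B hB hBc hsubset
    apply Set.Subset.antisymm ?_ hsubset
    intro x hxB
    obtain ⟨z, rfl⟩ := hsurj x
    have hc0 : π c.val ∈ B := hsubset ((hmemiff _ _).mpr (by simp))
    have hfin := hclaim B hB hBc l le_rfl z c.val hxB hc0
    rw [← hN] at hfin
    exact (hmemiff _ _).mpr hfin
  -- partition
  have hexu : ∀ x, ∃! A, A ∈ Set.range Abar ∧ x ∈ A := by
    intro x
    obtain ⟨z, rfl⟩ := hsurj x
    refine ⟨Abar ((z : ZMod N)), ⟨⟨_, rfl⟩, (hmemiff _ _).mpr (hres z)⟩, ?_⟩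
    rintro A ⟨⟨c, rfl⟩, hmem⟩
    have hd := (hmemiff z c).mp hmem
    have h2 := hres z
    have : (N : ℤ) ∣ ((c.val : ℤ) - (((z : ZMod N)).val : ℤ)) := by
      have heq : (c.val : ℤ) - (((z : ZMod N)).val : ℤ)
          = (z - (((z : ZMod N)).val : ℤ)) - (z - (c.val : ℤ)) := by ring
      rw [heq]
      exact dvd_sub h2 hd
    exact congrArg Abar (hval c _ this)
  -- cardinality
  have hinj : Function.Injective Abar := by
    intro c c' h
    have h1 : π c.val ∈ Abar c := (hmemiff _ _).mpr (by simp)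
    rw [h] at h1
    exact hval c c' ((hmemiff _ _).mp h1)
  have hcard : (Set.range Abar).ncard = N := by
    rw [← Nat.card_coe_set_eq, Nat.card_range_of_injective hinj,
      Nat.card_eq_fintype_card, ZMod.card]
  -- equivalence with the small quandle
  have hequiv : ∀ c : ZMod N, ∃ e : (LaurentPolynomial ℤ ⧸ idl (n l) a) ≃ (Abar c),
      ∀ u v, ((e (qOp (idl (n l) a) u v)) : LaurentPolynomial ℤ ⧸ idl (n 0) a)
        = qOp (idl (n 0) a) (e u) (e v) := by
    intro c
    set f : (LaurentPolynomial ℤ ⧸ idl (n l) a) → ℤ :=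
      fun x => (c.val : ℤ) + N * (Function.surjInv hsurj' x) with hfdef
    have hfs : ∀ z : ℤ, π (f (π' z)) = π ((c.val : ℤ) + N * z) := by
      intro z
      rw [hπeq]
      have h1 : π' (Function.surjInv hsurj' (π' z)) = π' z := Function.surjInv_eq hsurj' _
      obtain ⟨d, hd⟩ := (hπ'eq _ _).mp h1
      exact ⟨d, by rw [hfdef]; linear_combination (N : ℤ) * hd⟩
    have hmemf : ∀ x, π (f x) ∈ Abar c := by
      intro x
      refine (hmemiff _ _).mpr ⟨Function.surjInv hsurj' x, by rw [hfdef]; ring⟩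
    refine ⟨Equiv.ofBijective (fun x => (⟨π (f x), hmemf x⟩ : Abar c)) ⟨?_, ?_⟩, ?_⟩
    · intro x y hxy
      obtain ⟨zx, rfl⟩ := hsurj' x
      obtain ⟨zy, rfl⟩ := hsurj' y
      have h1 := congrArg Subtype.val hxy
      dsimp only at h1
      rw [hfs zx, hfs zy, hπeq] at h1
      obtain ⟨d, hd⟩ := h1
      rw [hπ'eq]
      refine ⟨d, ?_⟩
      have hNne : (N : ℤ) ≠ 0 := by exact_mod_cast hNpos.ne'
      have : (N : ℤ) * (zx - zy) = (N : ℤ) * (k' * d) := by linear_combination hd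
      have := mul_left_cancel₀ hNne this
      linarith [this]
    · rintro ⟨x, hx⟩
      obtain ⟨z, rfl, hzd⟩ := hx
      obtain ⟨d, hd⟩ := hzd
      refine ⟨π' d, Subtype.ext ?_⟩
      show π (f (π' d)) = π z
      rw [hfs]
      congr 1
      linarith [hd]
    · intro u v
      obtain ⟨zu, rfl⟩ := hsurj' u
      obtain ⟨zv, rfl⟩ := hsurj' v
      show π (f (qOp (idl (n l) a) (π' zu) (π' zv)))
          = qOp (idl (n 0) a) (π (f (π' zu))) (π (f (π' zv)))
      rw [hqop' zu zv, hfs, hfs, hfs, hqop, hπeq]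
      exact ⟨0, by ring⟩
  -- assemble
  refine ⟨Set.range Abar, ?_, hexu, ?_, ?_⟩
  · rintro A ⟨c, rfl⟩
    exact ⟨hsub c, hconn c, hmax c⟩
  · rw [hcard, hN]
  · rintro A ⟨c, rfl⟩
    exact hequiv c
end

section
/- For m > 0, write m = 2^l·k with k odd. Then the dihedral quandle R_m decomposes into exactly 2^l maximal connected subquandles, each isomorphic to the dihedral quandle R_k. -/
/-- The dihedral quandle operation on `R_m = ℤ/mℤ`: `a * b = 2b - a`. -/
def dihOp (m : ℕ) (a b : ZMod m) : ZMod m := 2 * b - a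

/-- Kernel of the cast `ZMod m → ZMod n` consists of multiples of `n`. -/
lemma ker_cast_aux {m n : ℕ} [NeZero m] (h : n ∣ m) {x : ZMod m}
    (hx : ZMod.castHom h (ZMod n) x = 0) : ∃ w : ZMod m, x = (n : ZMod m) * w := by
  have hx' : ((x.val : ℕ) : ZMod n) = 0 := by
    rw [← map_natCast (ZMod.castHom h (ZMod n)) x.val, ZMod.natCast_zmod_val, hx]
  rw [ZMod.natCast_eq_zero_iff] at hx'
  obtain ⟨t, ht⟩ := hx'
  refine ⟨(t : ZMod m), ?_⟩
  rw [← ZMod.natCast_zmod_val x, ht]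
  push_cast
  ring

/-- Two points of a connected set have the same image mod `2^j`. -/
lemma key_conn {m : ℕ} [NeZero m] :
    ∀ j : ℕ, ∀ hj : (2:ℕ)^j ∣ m, ∀ S : Set (ZMod m),
      ConnOn (dihOp m) S → ∀ x ∈ S, ∀ y ∈ S,
        ZMod.castHom hj (ZMod (2^j)) x = ZMod.castHom hj (ZMod (2^j)) y := by
  intro j
  induction j with
  | zero =>
    intro hj S hS x hx y hy
    haveI : Subsingleton (ZMod (2^0)) := by
      have h1 : (2:ℕ)^0 = 1 := rfl
      rw [h1]; infer_instance
    exact Subsingleton.elim _ _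
  | succ j ih =>
    intro hj1 S hS x hx y hy
    have hj : (2:ℕ)^j ∣ m := dvd_trans (pow_dvd_pow 2 (Nat.le_succ j)) hj1
    set π := ZMod.castHom hj1 (ZMod (2^(j+1))) with hπ
    set E : ZMod m → ZMod m → Prop := fun z w => π z = π w ∨ π z + π w = 2 * π x with hE
    have hbase : ∀ z w, (∃ c ∈ S, dihOp m z c = w) → E z w := by
      rintro z w ⟨c, hc, hzc⟩
      have hcx : ZMod.castHom hj (ZMod (2^j)) (c - x) = 0 := by
        rw [map_sub, ih hj S hS c hc x hx, sub_self]
      obtain ⟨w', hw'⟩ := ker_cast_aux hj hcx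
      have h2cx : π (2 * (c - x)) = 0 := by
        have h1 : 2 * (c - x) = ((2^(j+1) : ℕ) : ZMod m) * w' := by
          rw [hw']; push_cast; ring
        rw [h1, map_mul, map_natCast, ZMod.natCast_self, zero_mul]
      right
      have hw : w = 2 * c - z := by rw [← hzc]; rfl
      have hπw : π w = 2 * π c - π z := by
        rw [hw, map_sub, map_mul]
        have h2 : π 2 = 2 := map_ofNat π 2
        rw [h2]
      have h2c : 2 * π c = 2 * π x := by
        have h3 := h2cx
        rw [map_mul, map_sub] at h3
        have h2 : π 2 = 2 := map_ofNat π 2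
        rw [h2] at h3
        linear_combination h3
      rw [hπw]
      linear_combination h2c
    have hEeq : ∀ z w, Relation.EqvGen (fun p q => ∃ c ∈ S, dihOp m p c = q) z w → E z w := by
      intro z w h
      induction h with
      | rel p q hpq => exact hbase p q hpq
      | refl p => left; rfl
      | symm p q _ ihpq =>
        rcases ihpq with h | h
        · left; exact h.symm
        · right; linear_combination h
      | trans p q r _ _ ih1 ih2 =>
        rcases ih1 with h1 | h1 <;> rcases ih2 with h2 | h2
        · left; rw [h1, h2]
        · right; rw [h1]; exact h2
        · right; rw [← h2]; exact h1
        · left; linear_combination h1 - h2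
    rcases hEeq x y (hS x hx y hy) with h | h
    · exact h
    · linear_combination -h

/-- Scaling by `2^l` transports congruence mod `k` to congruence mod `m = 2^l k`. -/
lemma scaled_eq {m l k : ℕ} (hfac : m = 2^l * k) {a b : ℤ}
    (h : (a : ZMod k) = b) : ((2^l * a : ℤ) : ZMod m) = ((2^l * b : ℤ) : ZMod m) := by
  rw [ZMod.intCast_eq_intCast_iff_dvd_sub] at h ⊢
  obtain ⟨c, hc⟩ := h
  exact ⟨c, by rw [hfac]; push_cast; linear_combination (2:ℤ)^l * hc⟩

lemma scaled_inj {m l k : ℕ} (hfac : m = 2^l * k) {a b : ℤ}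
    (h : ((2^l * a : ℤ) : ZMod m) = ((2^l * b : ℤ) : ZMod m)) : (a : ZMod k) = b := by
  rw [ZMod.intCast_eq_intCast_iff_dvd_sub] at h ⊢
  obtain ⟨c, hc⟩ := h
  rw [hfac] at hc
  refine ⟨c, ?_⟩
  have h2 : (2:ℤ)^l ≠ 0 := by positivity
  apply mul_left_cancel₀ h2
  push_cast at hc ⊢
  linear_combination hc

/-- For `m = 2^l · k > 0` with `k` odd, the dihedral quandle `R_m` decomposes
into exactly `2^l` maximal connected subquandles, each isomorphic as a quandle
to the dihedral quandle `R_k`. -/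
theorem stmt_16 (m l k : ℕ) (hm : 0 < m) (hk : Odd k) (hfac : m = 2 ^ l * k) :
    ∃ P : Set (Set (ZMod m)),
      (∀ A ∈ P, IsMaxConn (dihOp m) A) ∧
      (∀ x, ∃! A, A ∈ P ∧ x ∈ A) ∧
      P.ncard = 2 ^ l ∧
      ∀ A ∈ P, ∃ e : ZMod k ≃ A,
        ∀ u v, (e (dihOp k u v) : ZMod m) = dihOp m (e u) (e v) := by
  haveI : NeZero m := ⟨hm.ne'⟩
  have hk0 : k ≠ 0 := by rintro rfl; exact absurd (Nat.odd_iff.mp hk) (by simp)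
  haveI : NeZero k := ⟨hk0⟩
  have hdvd : (2:ℕ)^l ∣ m := ⟨k, hfac⟩
  set π := ZMod.castHom hdvd (ZMod (2^l)) with hπdef
  have hπsurj : ∀ r : ZMod (2^l), π ((r.val : ℕ) : ZMod m) = r := by
    intro r
    rw [map_natCast, ZMod.natCast_zmod_val]
  have hπ2 : π 2 = 2 := map_ofNat π 2
  have hπop : ∀ a b : ZMod m, π (dihOp m a b) = 2 * π b - π a := by
    intro a b
    show π (2 * b - a) = _
    rw [map_sub, map_mul, hπ2]
  set f : ZMod (2^l) → Set (ZMod m) := fun r => π ⁻¹' {r} with hf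
  -- coprimality and halving on the kernel
  have hcop : IsCoprime (2 : ℤ) (k : ℤ) := by
    have h1 : Nat.Coprime 2 k :=
      (Nat.Prime.coprime_iff_not_dvd Nat.prime_two).mpr
        (by intro hdd; rw [Nat.odd_iff] at hk; omega)
    exact_mod_cast Nat.isCoprime_iff_coprime.mpr h1
  obtain ⟨u, v, huv⟩ := hcop
  have hhalf : ∀ d : ZMod m, π d = 0 → ∃ e : ZMod m, π e = 0 ∧ 2 * e = d := by
    intro d hd
    obtain ⟨w, hw⟩ := ker_cast_aux hdvd hd
    have hkd : (k : ZMod m) * d = 0 := by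
      rw [hw, ← mul_assoc, ← Nat.cast_mul]
      have h1 : k * 2^l = m := by rw [hfac]; ring
      rw [h1, ZMod.natCast_self, zero_mul]
    refine ⟨((u : ℤ) : ZMod m) * d, ?_, ?_⟩
    · rw [map_mul, hd, mul_zero]
    · have huv' : ((u : ℤ) : ZMod m) * 2 + ((v : ℤ) : ZMod m) * (k : ZMod m) = 1 := by
        have h1 := congrArg (fun t : ℤ => (t : ZMod m)) huv
        push_cast at h1
        linear_combination h1
      linear_combination d * huv' - ((v : ℤ) : ZMod m) * hkd
  refine ⟨Set.range f, ?_, ?_, ?_, ?_⟩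
  · -- each fiber is a maximal connected subquandle
    rintro A ⟨r, rfl⟩
    refine ⟨⟨⟨((r.val : ℕ) : ZMod m), hπsurj r⟩, ?_, ?_⟩, ?_, ?_⟩
    · intro a ha b hb
      have ha' : π a = r := ha
      have hb' : π b = r := hb
      show π (dihOp m a b) = r
      rw [hπop, ha', hb']; ring
    · intro a ha b hb x hx
      have ha' : π a = r := ha
      have hb' : π b = r := hb
      have h1 := hπop x b
      rw [hx] at h1
      show π x = r
      linear_combination 2 * hb' - ha' + h1
    · intro a ha b hb
      have ha' : π a = r := ha
      have hb' : π b = r := hb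
      have hd : π (b - a) = 0 := by rw [map_sub, ha', hb', sub_self]
      obtain ⟨e, he0, he2⟩ := hhalf _ hd
      refine Relation.EqvGen.rel _ _ ⟨a + e, ?_, ?_⟩
      · show π (a + e) = r
        rw [map_add, ha', he0, add_zero]
      · show 2 * (a + e) - a = b
        linear_combination he2
    · intro B hBsub hBconn hAB
      have ha₀ : ((r.val : ℕ) : ZMod m) ∈ π ⁻¹' {r} := hπsurj r
      apply Set.Subset.antisymm _ hAB
      intro y hy
      have := key_conn l hdvd B hBconn y hy _ (hAB ha₀)
      show π y = r
      rw [← hπsurj r]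
      exact this
  · -- partition
    intro x
    refine ⟨f (π x), ⟨⟨π x, rfl⟩, rfl⟩, ?_⟩
    rintro B ⟨⟨r, rfl⟩, hxB⟩
    have h1 : π x = r := hxB
    rw [h1]
  · -- cardinality
    have hfinj : Function.Injective f := by
      intro r r' h
      have hx : ((r.val : ℕ) : ZMod m) ∈ f r := hπsurj r
      rw [h] at hx
      have h1 : π ((r.val : ℕ) : ZMod m) = r' := hx
      rw [hπsurj r] at h1
      exact h1
    calc (Set.range f).ncard = (f '' Set.univ).ncard := by rw [Set.image_univ]
      _ = (Set.univ : Set (ZMod (2^l))).ncard := Set.ncard_image_of_injective _ hfinj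
      _ = Nat.card (ZMod (2^l)) := Set.ncard_univ _
      _ = 2^l := Nat.card_zmod _
  · -- each fiber is isomorphic to R_k
    rintro A ⟨r, rfl⟩
    set x₀ : ZMod m := ((r.val : ℕ) : ZMod m) with hx₀def
    have hx₀ : π x₀ = r := hπsurj r
    have hg : ∀ t : ZMod k, x₀ + ((2^l * (t.val : ℤ) : ℤ) : ZMod m) ∈ f r := by
      intro t
      show π _ = r
      rw [map_add, hx₀, map_intCast]
      have h0 : (((2:ℤ)^l * (t.val : ℤ) : ℤ) : ZMod (2^l)) = 0 :=
        (ZMod.intCast_zmod_eq_zero_iff_dvd _ _).mpr ⟨(t.val : ℤ), by push_cast; ring⟩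
      rw [h0, add_zero]
    set g : ZMod k → (f r : Set (ZMod m)) :=
      fun t => ⟨x₀ + ((2^l * (t.val : ℤ) : ℤ) : ZMod m), hg t⟩ with hgdef
    have hnatval : ∀ t : ZMod k, (((t.val : ℤ)) : ZMod k) = t := by
      intro t; push_cast; exact ZMod.natCast_zmod_val t
    have hbij : Function.Bijective g := by
      constructor
      · intro t t' h
        have h1 : x₀ + ((2^l * (t.val : ℤ) : ℤ) : ZMod m)
            = x₀ + ((2^l * (t'.val : ℤ) : ℤ) : ZMod m) := congrArg Subtype.val h
        have h2 : ((2^l * (t.val : ℤ) : ℤ) : ZMod m) = ((2^l * (t'.val : ℤ) : ℤ) : ZMod m) := by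
          linear_combination h1
        have h3 := scaled_inj hfac h2
        rw [hnatval t, hnatval t'] at h3
        exact h3
      · rintro ⟨y, hy⟩
        have hy' : π y = r := hy
        have hd : π (y - x₀) = 0 := by rw [map_sub, hy', hx₀, sub_self]
        obtain ⟨w, hw⟩ := ker_cast_aux hdvd hd
        refine ⟨((w.val : ℤ) : ZMod k), ?_⟩
        apply Subtype.ext
        show x₀ + ((2^l * (((((w.val : ℤ)) : ZMod k)).val : ℤ) : ℤ) : ZMod m) = y
        have ht : (((((((w.val : ℤ)) : ZMod k)).val : ℤ)) : ZMod k) = ((w.val : ℤ) : ZMod k) :=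
          hnatval _
        have h1 := scaled_eq hfac ht
        rw [h1]
        have h2 : ((2^l * (w.val : ℤ) : ℤ) : ZMod m) = ((2^l : ℕ) : ZMod m) * w := by
          push_cast [ZMod.natCast_zmod_val]
          ring
        rw [h2]
        linear_combination -hw
    refine ⟨Equiv.ofBijective g hbij, ?_⟩
    intro p q
    show (g (dihOp k p q) : ZMod m) = dihOp m (g p) (g q)
    have hcong : (((dihOp k p q).val : ℤ) : ZMod k)
        = ((2 * (q.val : ℤ) - (p.val : ℤ) : ℤ) : ZMod k) := by
      rw [hnatval]
      push_cast [ZMod.natCast_zmod_val]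
      rfl
    have h1 := scaled_eq hfac hcong
    show x₀ + ((2^l * ((dihOp k p q).val : ℤ) : ℤ) : ZMod m) = dihOp m _ _
    rw [h1]
    show _ = 2 * (x₀ + ((2^l * (q.val : ℤ) : ℤ) : ZMod m))
        - (x₀ + ((2^l * (p.val : ℤ) : ℤ) : ZMod m))
    push_cast
    ring
end

section
/- Let X = ⊔_{λ∈Λ} G_λ be a multiple conjugation quandle and A ⊆ X a subset. Then for any x in the sub-multiple conjugation quandle ⟨A⟩_MCQ generated by A, there exists a ∈ A such that the identity element e_x of the group component containing x can be obtained from e_a by applying finitely many maps S_{a_i}^{±1} with a_i ∈ A. -/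
/-- A multiple conjugation quandle: a disjoint union `Σ λ, G λ` of groups with
a binary operation `*` satisfying the multiple conjugation quandle axioms. -/
structure MCQ {Λ : Type*} (G : Λ → Type*) [∀ l, Group (G l)] where
  op : (Σ l, G l) → (Σ l, G l) → (Σ l, G l)
  conj : ∀ (l : Λ) (a b : G l), op ⟨l, a⟩ ⟨l, b⟩ = ⟨l, b⁻¹ * a * b⟩
  op_one : ∀ (x : Σ l, G l) (l : Λ), op x ⟨l, 1⟩ = x
  op_mul : ∀ (x : Σ l, G l) (l : Λ) (a b : G l),
    op x ⟨l, a * b⟩ = op (op x ⟨l, a⟩) ⟨l, b⟩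
  distrib : ∀ x y z, op (op x y) z = op (op x z) (op y z)
  mul_op : ∀ (l : Λ) (a b : G l) (x : Σ l, G l),
    ∃ (μ : Λ) (a' b' : G μ), op ⟨l, a⟩ x = ⟨μ, a'⟩ ∧ op ⟨l, b⟩ x = ⟨μ, b'⟩ ∧
      op ⟨l, a * b⟩ x = ⟨μ, a' * b'⟩

/-- `Y` is closed under the sub-multiple conjugation quandle operations:
closed under `*` and, within each group component, under inverses and
products. -/
def IsSubMCQ {Λ : Type*} {G : Λ → Type*} [∀ l, Group (G l)] (X : MCQ G)
    (Y : Set (Σ l, G l)) : Prop :=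
  (∀ a ∈ Y, ∀ b ∈ Y, X.op a b ∈ Y) ∧
    (∀ (l : Λ) (g : G l), (⟨l, g⟩ : Σ l, G l) ∈ Y → (⟨l, g⁻¹⟩ : Σ l, G l) ∈ Y) ∧
    (∀ (l : Λ) (g h : G l), (⟨l, g⟩ : Σ l, G l) ∈ Y → (⟨l, h⟩ : Σ l, G l) ∈ Y →
      (⟨l, g * h⟩ : Σ l, G l) ∈ Y)

/-- The sub-multiple conjugation quandle generated by `A`: the smallest
sub-multiple conjugation quandle containing `A`. -/
def genMCQ {Λ : Type*} {G : Λ → Type*} [∀ l, Group (G l)] (X : MCQ G)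
    (A : Set (Σ l, G l)) : Set (Σ l, G l) :=
  ⋂₀ {Y | IsSubMCQ X Y ∧ A ⊆ Y}

/-- For any `x` in the sub-multiple conjugation quandle `⟨A⟩_MCQ` generated by
a (nonempty) subset `A`, there is `a ∈ A` such that the identity `e_x` of the
group component containing `x` is obtained from `e_a` by finitely many maps
`S_{a_i}^{±1}` with `a_i ∈ A`. -/
theorem stmt_19 {Λ : Type*} {G : Λ → Type*} [∀ l, Group (G l)] (X : MCQ G)
    (A : Set (Σ l, G l)) (hA : A.Nonempty) :
    ∀ x ∈ genMCQ X A, ∃ a ∈ A,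
      Relation.EqvGen (fun u v => ∃ c ∈ A, X.op u c = v)
        (⟨a.1, 1⟩ : Σ l, G l) (⟨x.1, 1⟩ : Σ l, G l) := by
  classical
  set R : (Σ l, G l) → (Σ l, G l) → Prop :=
    fun u v => ∃ c ∈ A, X.op u c = v with hRdef
  -- identities map to identities
  have hid : ∀ (l : Λ) (y : Σ l, G l), X.op ⟨l, 1⟩ y = ⟨(X.op ⟨l, 1⟩ y).1, 1⟩ := by
    intro l y
    obtain ⟨μ, a', b', h1, h2, h3⟩ := X.mul_op l 1 1 y
    rw [one_mul] at h3
    have hab : a' = b' := by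
      have := h1.symm.trans h2
      simpa using this
    have h13 : a' = a' * b' := by
      have := h1.symm.trans h3
      simpa using this
    have hb1 : b' = 1 := left_eq_mul.mp h13
    rw [h1, hab.trans hb1]
  -- identity of component of `op x y` is `op ⟨x.1, 1⟩ y`
  have hcomp : ∀ (x y : Σ l, G l), X.op ⟨x.1, 1⟩ y = ⟨(X.op x y).1, 1⟩ := by
    intro x y
    obtain ⟨μ, a', b', h1, h2, h3⟩ := X.mul_op x.1 1 x.2 y
    rw [one_mul, Sigma.eta] at h3
    have ha : a' = 1 := by
      have := h2.symm.trans h3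
      have hb : b' = a' * b' := by simpa using this
      exact (right_eq_mul.mp hb)
    rw [h1, ha, h3]
  -- the candidate sub-MCQ
  set Y : Set (Σ l, G l) := {y | (∃ a ∈ A, Relation.EqvGen R ⟨a.1, 1⟩ ⟨y.1, 1⟩) ∧
    ∀ l : Λ, Relation.EqvGen R ⟨l, 1⟩ (X.op ⟨l, 1⟩ y)} with hYdef
  have hAY : A ⊆ Y := by
    intro c hc
    refine ⟨⟨c, hc, Relation.EqvGen.refl _⟩, fun l => ?_⟩
    exact Relation.EqvGen.rel _ _ ⟨c, hc, rfl⟩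
  have hop : ∀ x ∈ Y, ∀ y ∈ Y, X.op x y ∈ Y := by
    intro x hx y hy
    obtain ⟨⟨a, ha, hax⟩, hx2⟩ := hx
    obtain ⟨⟨b, hb, hby⟩, hy2⟩ := hy
    constructor
    · refine ⟨a, ha, hax.trans _ _ _ ?_⟩
      have := hy2 x.1
      rwa [hcomp x y] at this
    · intro μ
      -- choose u with op u y = ⟨μ,1⟩
      set u : Σ l, G l := X.op ⟨μ, 1⟩ ⟨y.1, (y.2)⁻¹⟩ with hu
      have huy : X.op u y = ⟨μ, 1⟩ := by
        rw [hu, ← X.op_mul ⟨μ, 1⟩ y.1 (y.2)⁻¹ y.2, inv_mul_cancel, X.op_one]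
      have huid : u = ⟨u.1, 1⟩ := by
        rw [hu]; exact hid μ _
      -- ⟨μ,1⟩ ~ u
      have h1 : Relation.EqvGen R (⟨μ, 1⟩ : Σ l, G l) u := by
        refine Relation.EqvGen.symm _ _ ?_
        have := hy2 u.1
        rw [← huid, huy] at this
        exact this
      -- u ~ op u x
      have h2 : Relation.EqvGen R u (X.op u x) := by
        have := hx2 u.1
        rw [← huid] at this
        exact this
      -- op u x ~ op (op u x) y
      have h3 : Relation.EqvGen R (X.op u x) (X.op (X.op u x) y) := by
        have hxid : X.op u x = ⟨(X.op u x).1, 1⟩ := by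
          conv_lhs => rw [huid]
          exact (hid u.1 x).trans (by rw [← huid])
        have := hy2 (X.op u x).1
        rw [← hxid] at this
        exact this
      have key : X.op (X.op u x) y = X.op ⟨μ, 1⟩ (X.op x y) := by
        rw [X.distrib, huy]
      have h4 := h1.trans _ _ _ (h2.trans _ _ _ h3)
      rw [key] at h4
      exact h4
  have hsub : IsSubMCQ X Y := by
    refine ⟨hop, ?_, ?_⟩
    · intro l g hg
      obtain ⟨h1, h2⟩ := hg
      refine ⟨h1, fun μ => ?_⟩
      set v : Σ l, G l := X.op ⟨μ, 1⟩ ⟨l, g⁻¹⟩ with hv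
      have hvid : v = ⟨v.1, 1⟩ := hid μ _
      have hvg : X.op v ⟨l, g⟩ = ⟨μ, 1⟩ := by
        rw [hv, ← X.op_mul ⟨μ, 1⟩ l g⁻¹ g, inv_mul_cancel, X.op_one]
      have : Relation.EqvGen R v (⟨μ, 1⟩ : Σ l, G l) := by
        have := h2 v.1
        rw [← hvid, hvg] at this
        exact this
      exact Relation.EqvGen.symm _ _ this
    · intro l g h hg hh
      obtain ⟨h1, hg2⟩ := hg
      obtain ⟨_, hh2⟩ := hh
      refine ⟨h1, fun μ => ?_⟩
      rw [X.op_mul ⟨μ, 1⟩ l g h]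
      have hmid : X.op ⟨μ, 1⟩ ⟨l, g⟩ = ⟨(X.op ⟨μ, 1⟩ ⟨l, g⟩).1, 1⟩ := hid μ _
      refine (hg2 μ).trans _ _ _ ?_
      have := hh2 (X.op ⟨μ, 1⟩ ⟨l, g⟩).1
      rw [← hmid] at this
      exact this
  intro x hx
  have hxY : x ∈ Y := hx Y ⟨hsub, hAY⟩
  exact hxY.1
end
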